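/- arXiv:0801.3944 — 4 statements merged into one kernel-verified Lean document; each statement's English description precedes it below -/
import Mathlib

section
/- If V and W are cyclically reduced linear words whose images in the free group FreeGroup S are conjugate, then there exists an integer i such that V = W_i (V is a cyclic rotation of W). -/
namespace GoldmanPaper

variable {α : Type*} [Inhabited α]

/-- The letter of `V` at index `i`, indices taken modulo the length of `V`. -/
def letterZ (V : List α) (i : ZMod V.length) : α := V.getD i.val default

/-- The cyclic rotation `V_i` for an index `i` mod the length of `V`. -/
def rotZ (V : List α) (i : ZMod V.length) : List α := V.rotate i.val

/-- The cyclic rotation `V_j` for an integer `j` (taken mod the length of `V`). -/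
def rot (V : List α) (j : ℤ) : List α := V.rotate ((j % (V.length : ℤ)).toNat)

/-- `V^k`: the concatenation of `k` copies of `V`. -/
def wpow (V : List α) (k : ℕ) : List α := (List.replicate k V).flatten

/-- A word is primitive if it is not of the form `W^r` with `r ≥ 2`. -/
def Primitive (V : List α) : Prop := ¬ ∃ (W : List α) (r : ℕ), 2 ≤ r ∧ V = wpow W r

/-- `V` is freely reduced: `v_{i+1} ≠ bar v_i` for all `i`. -/
def FreelyReduced (bar : α → α) (V : List α) : Prop :=
  ∀ i : ℕ, i + 1 < V.length → V.getD (i + 1) default ≠ bar (V.getD i default)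

/-- `V` is cyclically reduced: nonempty, freely reduced, and `v_0 ≠ bar v_{n-1}`. -/
def CyclicallyReduced (bar : α → α) (V : List α) : Prop :=
  V ≠ [] ∧ FreelyReduced bar V ∧ V.getD 0 default ≠ bar (V.getD (V.length - 1) default)

/-- The generating step of the equivalence relation `R(V,W)` on `I(V,W)`:
rule 1 relates `(j,k)` with `(j+1,k+1)` whenever `v_j = w_k`; rule 2 relates
`(j+1,k)` with `(j,k+1)` whenever `v_j = bar w_k`. -/
def Step (bar : α → α) (V W : List α) :
    ZMod V.length × ZMod W.length → ZMod V.length × ZMod W.length → Prop :=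
  fun p q =>
    (q = (p.1 + 1, p.2 + 1) ∧ letterZ V p.1 = letterZ W p.2) ∨
    (q = (p.1 - 1, p.2 + 1) ∧ letterZ V (p.1 - 1) = bar (letterZ W p.2))

/-- The equivalence relation `R(V,W)` generated by rules 1 and 2. -/
def REq (bar : α → α) (V W : List α) :
    ZMod V.length × ZMod W.length → ZMod V.length × ZMod W.length → Prop :=
  Relation.EqvGen (Step bar V W)

/-- A pair `(i,j) ∈ I(V,W)` is extremal if `v_i ≠ w_j` and `v_i ≠ bar w_{j-1}`. -/
def Extremal (bar : α → α) (V W : List α) (p : ZMod V.length × ZMod W.length) : Prop :=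
  letterZ V p.1 ≠ letterZ W p.2 ∧ letterZ V p.1 ≠ bar (letterZ W (p.2 - 1))

section Order

variable [LinearOrder α]

/-- The order on `α` cyclically rotated so that `x` is the smallest element. -/
def cycLT (x a b : α) : Prop :=
  if (x ≤ a ∧ x ≤ b) ∨ (a < x ∧ b < x) then a < b else x ≤ a ∧ b < x

/-- The order on half-infinite words. -/
def hwLT (bar : α → α) (T U : ℕ → α) : Prop :=
  T 0 < U 0 ∨ ∃ j : ℕ, (∀ i ≤ j, T i = U i) ∧ cycLT (bar (T j)) (T (j + 1)) (U (j + 1))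

/-- A 4-tuple is linearly ordered: strictly increasing or strictly decreasing. -/
def LinOrd4 {β : Type*} (lt : β → β → Prop) (a b c d : β) : Prop :=
  (lt a b ∧ lt b c ∧ lt c d) ∨ (lt d c ∧ lt c b ∧ lt b a)

/-- A 4-tuple is cyclically ordered: some cyclic permutation is linearly ordered. -/
def CycOrd4 {β : Type*} (lt : β → β → Prop) (a b c d : β) : Prop :=
  LinOrd4 lt a b c d ∨ LinOrd4 lt b c d a ∨ LinOrd4 lt c d a b ∨ LinOrd4 lt d a b c

/-- The half-infinite word `V_i^∞`. -/
def fwd (V : List α) (i : ZMod V.length) : ℕ → α :=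
  fun t => letterZ V (i + (t : ZMod V.length))

/-- The half-infinite word `V_i^{-∞} = (bar V_i)^∞`. -/
def bwd (bar : α → α) (V : List α) (i : ZMod V.length) : ℕ → α :=
  fun t => bar (letterZ V (i - 1 - (t : ZMod V.length)))

open scoped Classical in
/-- The sign `s_{V,W}(i,j) ∈ {-1,0,1}`. -/
noncomputable def sgn (bar : α → α) (V W : List α)
    (i : ZMod V.length) (j : ZMod W.length) : ℤ :=
  if CycOrd4 (hwLT bar) (fwd V i) (fwd W j) (bwd bar V i) (bwd bar W j) then 1
  else if CycOrd4 (hwLT bar) (fwd V i) (bwd bar W j) (bwd bar V i) (fwd W j) then -1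
  else 0

end Order

/-- The involution `bar` on the alphabet `S × Bool`. -/
def pbar {S : Type*} : S × Bool → S × Bool := fun p => (p.1, !p.2)


set_option linter.unusedSectionVars false

section Helpers

variable {S : Type*} [Inhabited S]

@[simp] lemma pbar_pbar (p : S × Bool) : pbar (pbar p) = p := by simp [pbar]

lemma pbar_inj {p q : S × Bool} (h : pbar p = pbar q) : p = q := by
  have := congrArg pbar h; simpa using this

/-- Freely reduced as a chain condition. -/
def Red' (L : List (S × Bool)) : Prop := List.IsChain (fun p q => q ≠ pbar p) L

lemma red'_reduce [DecidableEq S] (L : List (S × Bool)) : Red' (FreeGroup.reduce L) := by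
  induction L with
  | nil => exact List.isChain_nil
  | cons p L ih =>
    rw [FreeGroup.reduce.cons]
    rcases hL : FreeGroup.reduce L with _ | ⟨hd, tl⟩
    · exact List.isChain_singleton p
    · rw [hL] at ih
      show Red' (if p.1 = hd.1 ∧ p.2 = !hd.2 then tl else p :: hd :: tl)
      split_ifs with hc
      · exact ih.tail
      · refine List.isChain_cons_cons.mpr ⟨?_, ih⟩
        intro hq
        exact hc (by simp [hq, pbar])

lemma reduce_eq_self_of_red' [DecidableEq S] :
    ∀ {L : List (S × Bool)}, Red' L → FreeGroup.reduce L = L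
  | [], _ => rfl
  | [p], _ => rfl
  | p :: q :: L, h => by
    have hr := reduce_eq_self_of_red' (L := q :: L) h.tail
    have hpq : q ≠ pbar p := (List.isChain_cons_cons.mp h).1
    rw [FreeGroup.reduce.cons, hr]
    show (if p.1 = q.1 ∧ p.2 = !q.2 then L else p :: q :: L) = p :: q :: L
    rw [if_neg]
    rintro ⟨h1, h2⟩
    refine hpq (show pbar p = q from ?_).symm
    simp [pbar, h1, h2]

lemma mk_inj [DecidableEq S] {A B : List (S × Bool)} (hA : Red' A) (hB : Red' B)
    (h : FreeGroup.mk A = FreeGroup.mk B) : A = B := by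
  have := congrArg FreeGroup.toWord h
  rwa [FreeGroup.toWord_mk, FreeGroup.toWord_mk, reduce_eq_self_of_red' hA,
    reduce_eq_self_of_red' hB] at this

lemma red'_toWord [DecidableEq S] (g : FreeGroup S) : Red' g.toWord := by
  have := red'_reduce (S := S) g.toWord
  rwa [FreeGroup.reduce_toWord] at this

lemma red'_invRev {L : List (S × Bool)} (h : Red' L) : Red' (FreeGroup.invRev L) := by
  unfold FreeGroup.invRev
  rw [Red', List.isChain_reverse]
  refine List.isChain_map_of_isChain _ ?_ h
  intro a b hab
  show (a.1, !a.2) ≠ pbar (b.1, !b.2)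
  intro he
  apply hab
  simp only [pbar] at he ⊢
  rw [Prod.mk.injEq] at he
  obtain ⟨h1, h2⟩ := he
  simp only [Bool.not_not] at h2
  simp [h1, h2]


lemma freelyReduced_iff_chain' (L : List (S × Bool)) :
    FreelyReduced pbar L ↔ List.IsChain (fun p q => q ≠ pbar p) L := by
  rw [List.isChain_iff_getElem, FreelyReduced]
  constructor
  · intro h i hi
    have h1 : i + 1 < L.length := by omega
    have h0 : i < L.length := by omega
    have := h i h1
    rwa [List.getD_eq_getElem _ _ h1, List.getD_eq_getElem _ _ h0] at this
  · intro h i hi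
    have := h i (by omega)
    rwa [← List.getD_eq_getElem _ default hi,
      ← List.getD_eq_getElem _ default (by omega : i < L.length)] at this

lemma CR_iff (a : S × Bool) (t : List (S × Bool)) :
    CyclicallyReduced pbar (a :: t) ↔
      List.IsChain (fun p q => q ≠ pbar p) (a :: t ++ [a]) := by
  have hne : (a :: t) ≠ [] := List.cons_ne_nil _ _
  have hlast : (a :: t).getD ((a :: t).length - 1) default = (a :: t).getLast hne := by
    rw [List.getD_eq_getElem _ _ (by simp), List.getLast_eq_getElem]
  have happ : a :: t ++ [a] = (a :: t) ++ [a] := rfl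
  rw [happ, List.isChain_append, CyclicallyReduced]
  constructor
  · rintro ⟨-, hfr, hcyc⟩
    refine ⟨(freelyReduced_iff_chain' _).mp hfr, List.isChain_singleton a, ?_⟩
    intro x hx y hy
    simp only [List.head?_cons, Option.mem_def, Option.some.injEq] at hy
    subst hy
    obtain ⟨h', hx'⟩ := List.mem_getLast?_eq_getLast hx
    subst hx'
    rw [← hlast]
    simpa using hcyc
  · rintro ⟨hch, -, hjun⟩
    refine ⟨hne, (freelyReduced_iff_chain' _).mpr hch, ?_⟩
    have := hjun ((a :: t).getLast hne)
      (by rw [List.getLast?_eq_getLast_of_ne_nil hne]; rfl) a (by rfl)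
    rw [hlast]
    simpa using this

lemma cr_red' {L : List (S × Bool)} (h : CyclicallyReduced pbar L) :
    Red' L :=
  (freelyReduced_iff_chain' L).mp h.2.1

lemma cr_rotate_one {a : S × Bool} {t : List (S × Bool)}
    (h : CyclicallyReduced pbar (a :: t)) : CyclicallyReduced pbar (t ++ [a]) := by
  cases t with
  | nil => simpa using h
  | cons b t' =>
    rw [CR_iff] at h
    rw [show (b :: t') ++ [a] = b :: (t' ++ [a]) from rfl, CR_iff]
    obtain ⟨hab, hch⟩ := List.isChain_cons_cons.mp h
    refine List.isChain_append.mpr ⟨hch, List.isChain_singleton b, ?_⟩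
    intro x hx y hy
    simp only [List.head?_cons, Option.mem_def, Option.some.injEq] at hy
    subst hy
    have hgl : (b :: (t' ++ [a])).getLast? = some a := by
      rw [show b :: (t' ++ [a]) = (b :: t') ++ [a] from rfl,
        List.getLast?_append_of_ne_nil _ (by simp : ([a] : List (S × Bool)) ≠ [])]
      rfl
    rw [hgl] at hx
    simp only [Option.mem_def, Option.some.injEq] at hx
    subst hx
    exact hab

lemma cr_rotate {L : List (S × Bool)} (h : CyclicallyReduced pbar L) (k : ℕ) :
    CyclicallyReduced pbar (L.rotate k) := by
  induction k with
  | zero => simpa using h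
  | succ k ih =>
    rw [← List.rotate_rotate]
    rcases hr : L.rotate k with _ | ⟨a, t⟩
    · exact absurd hr ih.1
    · rw [hr] at ih
      have : (a :: t).rotate 1 = t ++ [a] := by
        rw [List.rotate_cons_succ, List.rotate_zero]
      rw [this]
      exact cr_rotate_one ih


lemma rotate1_eq (a : S × Bool) (t : List (S × Bool)) :
    (a :: t).rotate 1 = t ++ [a] := by
  rw [List.rotate_cons_succ, List.rotate_zero]

lemma key [DecidableEq S] (U : List (S × Bool)) :
    Red' U → ∀ W V : List (S × Bool), CyclicallyReduced pbar W → CyclicallyReduced pbar V →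
      FreeGroup.mk V = FreeGroup.mk (U ++ W ++ FreeGroup.invRev U) →
      ∃ m : ℕ, V = W.rotate m := by
  induction U using List.reverseRecOn with
  | nil =>
    intro _ W V hW hV h
    simp only [List.nil_append, FreeGroup.invRev, List.map_nil, List.reverse_nil,
      List.append_nil] at h
    exact ⟨0, by rw [List.rotate_zero]; exact mk_inj (cr_red' hV) (cr_red' hW) h⟩
  | append_singleton U' x ih =>
    intro hU W V hW hV h
    have hU' : Red' U' := (List.isChain_append.mp hU).1
    have hinv : FreeGroup.invRev (U' ++ [x]) = pbar x :: FreeGroup.invRev U' := by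
      simp [FreeGroup.invRev, pbar]
    obtain ⟨w, t, rfl⟩ : ∃ w t, W = w :: t := by
      rcases W with _ | ⟨w, t⟩
      · exact absurd rfl hW.1
      · exact ⟨w, t, rfl⟩
    by_cases h1 : w = pbar x
    · -- cancellation on the left: pass to the rotation t ++ [w]
      have hstep0 : FreeGroup.mk (U' ++ (x.1, x.2) :: (x.1, !x.2) ::
            (t ++ w :: FreeGroup.invRev U'))
          = FreeGroup.mk (U' ++ (t ++ w :: FreeGroup.invRev U')) :=
        Quot.sound (FreeGroup.Red.Step.not)
      have e1 : (U' ++ [x]) ++ (w :: t) ++ FreeGroup.invRev (U' ++ [x])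
          = U' ++ (x.1, x.2) :: (x.1, !x.2) :: (t ++ w :: FreeGroup.invRev U') := by
        rw [hinv, h1]
        simp [pbar, List.append_assoc]
      have e2 : U' ++ (t ++ [w]) ++ FreeGroup.invRev U'
          = U' ++ (t ++ w :: FreeGroup.invRev U') := by
        simp [List.append_assoc]
      have h' : FreeGroup.mk V = FreeGroup.mk (U' ++ (t ++ [w]) ++ FreeGroup.invRev U') := by
        rw [h, e1, hstep0, e2]
      obtain ⟨m, hm⟩ := ih hU' (t ++ [w]) V (cr_rotate_one hW) hV h'
      refine ⟨m + 1, ?_⟩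
      rw [List.rotate_cons_succ, hm]
    · by_cases h2 : x = (w :: t).getLast (List.cons_ne_nil _ _)
      · -- cancellation on the right
        set t₀ := (w :: t).dropLast with ht₀
        have hWdec : t₀ ++ [x] = w :: t := by
          rw [h2]; exact List.dropLast_append_getLast _
        have hstep0 : FreeGroup.mk ((U' ++ x :: t₀) ++ (x.1, x.2) :: (x.1, !x.2) ::
              FreeGroup.invRev U')
            = FreeGroup.mk ((U' ++ x :: t₀) ++ FreeGroup.invRev U') :=
          Quot.sound (FreeGroup.Red.Step.not)
        have e1 : (U' ++ [x]) ++ (w :: t) ++ FreeGroup.invRev (U' ++ [x])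
            = (U' ++ x :: t₀) ++ (x.1, x.2) :: (x.1, !x.2) :: FreeGroup.invRev U' := by
          rw [hinv, ← hWdec]
          simp [pbar, List.append_assoc]
        have e2 : (U' ++ x :: t₀) ++ FreeGroup.invRev U'
            = U' ++ (x :: t₀) ++ FreeGroup.invRev U' := by
          simp [List.append_assoc]
        have hrot : (w :: t).rotate t₀.length = x :: t₀ := by
          rw [← hWdec, List.rotate_eq_drop_append_take (by simp), List.drop_left,
            List.take_left]
          rfl
        have hW2 : CyclicallyReduced pbar (x :: t₀) := by
          rw [← hrot]; exact cr_rotate hW _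
        have h' : FreeGroup.mk V = FreeGroup.mk (U' ++ (x :: t₀) ++ FreeGroup.invRev U') := by
          rw [h, e1, hstep0, e2]
        obtain ⟨m, hm⟩ := ih hU' (x :: t₀) V hW2 hV h'
        refine ⟨t₀.length + m, ?_⟩
        rw [← List.rotate_rotate, hrot, hm]
      · -- no cancellation: the whole word is reduced, contradicting cyclic reducedness of V
        exfalso
        have hC : Red' (FreeGroup.invRev (U' ++ [x])) := red'_invRev hU
        have hfull : Red' ((U' ++ [x]) ++ (w :: t) ++ FreeGroup.invRev (U' ++ [x])) := by
          refine List.isChain_append.mpr ⟨List.isChain_append.mpr ⟨hU, cr_red' hW, ?_⟩, hC, ?_⟩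
          · intro p hp q hq
            rw [List.getLast?_append_of_ne_nil _ (by simp : ([x] : List (S × Bool)) ≠ [])] at hp
            simp only [List.getLast?_singleton, Option.mem_def, Option.some.injEq] at hp
            simp only [List.head?_cons, Option.mem_def, Option.some.injEq] at hq
            subst hp; subst hq
            exact fun hc => h1 hc
          · intro p hp q hq
            rw [List.getLast?_append_of_ne_nil _ (List.cons_ne_nil w t),
              List.getLast?_eq_getLast_of_ne_nil (List.cons_ne_nil w t)] at hp
            rw [hinv] at hq
            simp only [List.head?_cons, Option.mem_def, Option.some.injEq] at hp hq
            subst hp; subst hq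
            intro hc
            exact h2 (pbar_inj hc)
        have hVeq : V = (U' ++ [x]) ++ (w :: t) ++ FreeGroup.invRev (U' ++ [x]) :=
          mk_inj (cr_red' hV) hfull h
        obtain ⟨y, Y, hY⟩ : ∃ y Y, U' ++ [x] = y :: Y :=
          List.exists_cons_of_ne_nil (by simp)
        have hhead : V.getD 0 default = y := by
          rw [hVeq, hY]; rfl
        have hVne : V ≠ [] := hV.1
        have hlastV : V.getLast? = some (pbar y) := by
          rw [hVeq]
          rw [List.getLast?_append_of_ne_nil _ (show FreeGroup.invRev (U' ++ [x]) ≠ [] by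
            rw [hinv]; exact List.cons_ne_nil _ _)]
          show (FreeGroup.invRev (U' ++ [x])).getLast? = _
          unfold FreeGroup.invRev
          rw [List.getLast?_eq_head?_reverse, List.reverse_reverse, hY]
          rfl
        have hlast : V.getD (V.length - 1) default = pbar y := by
          have h0 : 0 < V.length := List.length_pos_iff.mpr hVne
          rw [List.getD_eq_getElem _ _ (by omega : V.length - 1 < V.length),
            ← List.getLast_eq_getElem hVne]
          have := List.getLast?_eq_getLast_of_ne_nil hVne
          rw [this] at hlastV
          exact Option.some.inj hlastV
        have := hV.2.2
        rw [hhead, hlast, pbar_pbar] at this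
        exact this rfl

end Helpers

/-- conjugate cyclically reduced words are cyclic rotations of each other. -/
theorem statement2 {S : Type*} [Inhabited S] (V W : List (S × Bool))
    (hV : CyclicallyReduced pbar V) (hW : CyclicallyReduced pbar W)
    (hconj : IsConj (FreeGroup.mk V) (FreeGroup.mk W)) :
    ∃ i : ℤ, V = rot W i := by
  classical
  obtain ⟨c, hc⟩ := isConj_iff.mp hconj.symm
  have h : FreeGroup.mk V =
      FreeGroup.mk (c.toWord ++ W ++ FreeGroup.invRev c.toWord) := by
    calc FreeGroup.mk V = c * FreeGroup.mk W * c⁻¹ := hc.symm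
      _ = FreeGroup.mk c.toWord * FreeGroup.mk W * (FreeGroup.mk c.toWord)⁻¹ := by
          rw [FreeGroup.mk_toWord]
      _ = _ := by rw [FreeGroup.inv_mk, FreeGroup.mul_mk, FreeGroup.mul_mk]
  obtain ⟨m, hm⟩ := key c.toWord (red'_toWord c) W V hW hV h
  refine ⟨(m : ℤ), ?_⟩
  rw [hm, rot]
  have hn : 0 < W.length := List.length_pos_iff.mpr hW.1
  have h2 : (((m : ℤ)) % (W.length : ℤ)).toNat = m % W.length := by
    omega
  rw [h2, List.rotate_mod]

end GoldmanPaper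
end

section
/- Let V and W be cyclically reduced words and let (i,j), (k,h), (l,f) be elements of I(V,W). Suppose (i,j) and (k,h) are related by an instance of rule 1, i.e. either (k,h) = (i+1,j+1) with v_i = w_j, or (i,j) = (k+1,h+1) with v_k = w_h. Then (k,h) and (l,f) are not related by an instance of rule 2, i.e. it is not the case that (l,f) = (k+1,h−1) with v_k = bar w_{h−1}, nor that (l,f) = (k−1,h+1) with v_{k−1} = bar w_h. -/
namespace GoldmanPaper

variable {α : Type*} [Inhabited α]

lemma letterZ_succ_ne (bar : α → α) (V : List α) (hV : CyclicallyReduced bar V)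
    (i : ZMod V.length) : letterZ V (i + 1) ≠ bar (letterZ V i) := by
  obtain ⟨hne, hfr, hcyc⟩ := hV
  have hn : V.length ≠ 0 := fun h0 => hne (List.length_eq_zero_iff.mp h0)
  haveI : NeZero V.length := ⟨hn⟩
  have hval : i.val < V.length := i.val_lt
  have hadd : (i + 1).val = (i.val + (1 : ZMod V.length).val) % V.length :=
    ZMod.val_add i 1
  have h1v : (1 : ZMod V.length).val = 1 % V.length := ZMod.val_one_eq_one_mod _
  unfold letterZ
  rcases Nat.lt_or_ge (i.val + 1) V.length with hlt | hge
  · have : (i + 1).val = i.val + 1 := by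
      rw [hadd, h1v, Nat.mod_eq_of_lt (by omega : 1 < V.length), Nat.mod_eq_of_lt hlt]
    rw [this]
    exact hfr i.val hlt
  · have ha : i.val = V.length - 1 := by omega
    have : (i + 1).val = 0 := by
      rw [hadd, h1v, ha]
      rcases Nat.eq_or_lt_of_le (Nat.one_le_iff_ne_zero.mpr hn) with h1 | h1
      · rw [← h1]
      · rw [Nat.mod_eq_of_lt h1, Nat.sub_add_cancel (by omega), Nat.mod_self]
    rw [this, ha]
    exact hcyc

/-- if `(i,j)` and `(k,h)` are related by an instance of rule 1, then `(k,h)`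
and `(l,f)` are not related by an instance of rule 2. -/
theorem statement4 (bar : α → α) (hbar : ∀ x, bar (bar x) = x) (hbarne : ∀ x, bar x ≠ x)
    (V W : List α) (hV : CyclicallyReduced bar V) (hW : CyclicallyReduced bar W)
    (i k l : ZMod V.length) (j h f : ZMod W.length)
    (hrule1 : ((k, h) = (i + 1, j + 1) ∧ letterZ V i = letterZ W j) ∨
              ((i, j) = (k + 1, h + 1) ∧ letterZ V k = letterZ W h)) :
    ¬ (((l, f) = (k + 1, h - 1) ∧ letterZ V k = bar (letterZ W (h - 1))) ∨
       ((l, f) = (k - 1, h + 1) ∧ letterZ V (k - 1) = bar (letterZ W h))) := by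
  rintro (⟨_, h2⟩ | ⟨_, h2⟩) <;>
    rcases hrule1 with ⟨hkh, h1⟩ | ⟨hkh, h1⟩ <;>
    obtain ⟨hk, hh⟩ := Prod.mk.injEq .. ▸ hkh
  · -- k = i+1, h = j+1, v_i = w_j, v_{i+1} = bar w_j
    subst hk hh
    simp only [add_sub_cancel_right] at h2
    exact letterZ_succ_ne bar V hV i (h2.trans (congrArg bar h1.symm))
  · -- i = k+1, j = h+1, v_k = w_h, v_k = bar w_{h-1}
    have := letterZ_succ_ne bar W hW (h - 1)
    rw [sub_add_cancel] at this
    exact this (h1.symm.trans h2)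
  · -- k = i+1, h = j+1, v_i = w_j, v_{k-1} = bar w_h
    subst hk hh
    simp only [add_sub_cancel_right] at h2
    have : letterZ W (j + 1) = bar (letterZ W j) := by
      rw [← hbar (letterZ W (j+1))]
      exact congrArg bar (h1.symm.trans h2).symm
    exact letterZ_succ_ne bar W hW j this
  · -- i = k+1, j = h+1, v_k = w_h, v_{k-1} = bar v_k
    have : letterZ V k = bar (letterZ V (k - 1)) := by
      rw [h2, hbar, h1]
    have h3 := letterZ_succ_ne bar V hV (k - 1)
    rw [sub_add_cancel] at h3
    exact h3 this

end GoldmanPaper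
end

section
/- Let V and W be cyclically reduced words and suppose (i,j) and (k,h) are elements of I(V,W) that are equivalent under R(V,W). Then the images in the free group FreeGroup S of the concatenated words V_i W_j and V_k W_h are conjugate. -/
namespace GoldmanPaper

variable {α : Type*} [Inhabited α]

lemma mk_singleton_pbar {S : Type*} (b : S × Bool) :
    FreeGroup.mk [pbar b] = (FreeGroup.mk [b])⁻¹ := by
  rw [FreeGroup.inv_mk]; rfl

lemma mk_rotate_one {S : Type*} [Inhabited S] (L : List (S × Bool)) (hL : L ≠ []) :
    FreeGroup.mk (L.rotate 1) =
      (FreeGroup.mk [L.getD 0 default])⁻¹ * FreeGroup.mk L * FreeGroup.mk [L.getD 0 default] := by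
  obtain ⟨a, t, rfl⟩ := List.exists_cons_of_ne_nil hL
  have h1 : (a :: t).rotate 1 = t ++ [a] := by
    simpa using List.rotate_cons_succ t a 0
  have h2 : a :: t = [a] ++ t := rfl
  have hd : (a :: t).getD 0 default = a := rfl
  rw [h1, hd, ← FreeGroup.mul_mk]
  conv_rhs => rw [h2, ← FreeGroup.mul_mk]
  group

lemma head_rotZ (V : List α) (hV : V ≠ []) (i : ZMod V.length) :
    (rotZ V i).getD 0 default = letterZ V i := by
  have hn : 0 < V.length := List.length_pos_iff.mpr hV
  haveI : NeZero V.length := ⟨hn.ne'⟩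
  have hi : i.val < V.length := ZMod.val_lt i
  rw [rotZ, letterZ, List.getD_eq_getElem _ _ (by simpa using hn),
      List.getD_eq_getElem _ _ hi]
  rw [List.getElem_rotate]
  congr 1
  simp [Nat.mod_eq_of_lt hi]

omit [Inhabited α] in
lemma rotZ_add_one (V : List α) (hV : V ≠ []) (i : ZMod V.length) :
    rotZ V (i + 1) = (rotZ V i).rotate 1 := by
  have hn : 0 < V.length := List.length_pos_iff.mpr hV
  haveI : NeZero V.length := ⟨hn.ne'⟩
  rw [rotZ, rotZ, List.rotate_rotate]
  have : (i + 1).val = (i.val + 1) % V.length := by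
    rw [ZMod.val_add, ZMod.val_one_eq_one_mod]
    conv_rhs => rw [Nat.add_mod]
    simp [Nat.mod_mod_of_dvd]
  rw [this, List.rotate_mod]

lemma mk_rotZ_add_one {S : Type*} [Inhabited S] (V : List (S × Bool)) (hV : V ≠ [])
    (i : ZMod V.length) :
    FreeGroup.mk (rotZ V (i + 1)) =
      (FreeGroup.mk [letterZ V i])⁻¹ * FreeGroup.mk (rotZ V i) * FreeGroup.mk [letterZ V i] := by
  rw [rotZ_add_one V hV i, mk_rotate_one _ (by simp [rotZ, List.rotate_eq_nil_iff, hV]),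
      head_rotZ V hV i]

lemma step_conj {S : Type*} [Inhabited S] (V W : List (S × Bool)) (hVne : V ≠ [])
    (hWne : W ≠ []) (p q : ZMod V.length × ZMod W.length) (hs : Step pbar V W p q) :
    IsConj (FreeGroup.mk (rotZ V p.1 ++ rotZ W p.2))
      (FreeGroup.mk (rotZ V q.1 ++ rotZ W q.2)) := by
  rw [← FreeGroup.mul_mk, ← FreeGroup.mul_mk]
  rcases hs with ⟨hq, hl⟩ | ⟨hq, hl⟩
  · subst hq
    rw [isConj_iff]
    refine ⟨(FreeGroup.mk [letterZ V p.1])⁻¹, ?_⟩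
    rw [mk_rotZ_add_one V hVne, mk_rotZ_add_one W hWne, ← hl]
    group
  · subst hq
    rw [isConj_iff]
    refine ⟨(FreeGroup.mk [letterZ W p.2])⁻¹, ?_⟩
    have h1 := mk_rotZ_add_one V hVne (p.1 - 1)
    rw [sub_add_cancel, hl, mk_singleton_pbar] at h1
    rw [mk_rotZ_add_one W hWne p.2, h1]
    group

/-- if `(i,j)` and `(k,h)` are `R(V,W)`-equivalent, then `V_i W_j` and
`V_k W_h` are conjugate in the free group. -/
theorem statement7 {S : Type*} [Inhabited S] (V W : List (S × Bool))
    (hV : CyclicallyReduced pbar V) (hW : CyclicallyReduced pbar W)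
    (i k : ZMod V.length) (j h : ZMod W.length)
    (heq : REq pbar V W (i, j) (k, h)) :
    IsConj (FreeGroup.mk (rotZ V i ++ rotZ W j)) (FreeGroup.mk (rotZ V k ++ rotZ W h)) := by
  have hgen : ∀ p q : ZMod V.length × ZMod W.length, REq pbar V W p q →
      IsConj (FreeGroup.mk (rotZ V p.1 ++ rotZ W p.2))
        (FreeGroup.mk (rotZ V q.1 ++ rotZ W q.2)) := by
    intro p q hpq
    induction hpq with
    | rel x y hxy => exact step_conj V W hV.1 hW.1 x y hxy
    | refl x => exact IsConj.refl _
    | symm x y _ ih => exact ih.symm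
    | trans x y z _ _ ih1 ih2 => exact ih1.trans ih2
  exact hgen (i, j) (k, h) heq

end GoldmanPaper
end

section
/- Let V and W be primitive cyclically reduced words, let k and l be positive integers, and set X = V^k and Y = W^l. Then Σ_{C ∈ LP(X,Y)} s_{X,Y}(a,b) · ⟦X_a Y_b⟧ = k · l · Σ_{C ∈ LP(V,W)} s_{V,W}(i,j) · ⟦(V_i)^k (W_j)^l⟧ in the free ℤ-module on conjugacy classes of FreeGroup S, where (a,b), respectively (i,j), denotes any representative of the class C of the corresponding sum; that is, the combinatorial Goldman bracket [X̂, Ŷ] of the (possibly non-primitive) words X, Y equals Σ_{C ∈ LP(X,Y)} s_{X,Y}(a,b) · ⟦X_a Y_b⟧. -/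
set_option linter.unusedSectionVars false
set_option maxHeartbeats 1000000


namespace GoldmanPaper

variable {α : Type*} [Inhabited α]

/-- `Σ_{C ∈ LP(X,Y)} s_(X,Y)(a,b) · ⟦X_a Y_b⟧`, `(a,b)` a representative of the class `C`
(only classes of linking pairs contribute, since the sign vanishes elsewhere). -/
noncomputable def combSumSimple {S : Type*} [Inhabited S] [LinearOrder (S × Bool)]
    (X Y : List (S × Bool)) : ConjClasses (FreeGroup S) →₀ ℤ :=
  if h : X.length = 0 ∨ Y.length = 0 then 0
  else
    haveI : NeZero X.length := ⟨fun hh => h (Or.inl hh)⟩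
    haveI : NeZero Y.length := ⟨fun hh => h (Or.inr hh)⟩
    haveI : Fintype (Quotient (Relation.EqvGen.setoid (Step pbar X Y))) := Fintype.ofFinite _
    ∑ C : Quotient (Relation.EqvGen.setoid (Step pbar X Y)),
      Finsupp.single
        (ConjClasses.mk (FreeGroup.mk (rotZ X C.out.1 ++ rotZ Y C.out.2)))
        (sgn pbar X Y C.out.1 C.out.2)

/-- `Σ_{C ∈ LP(V,W)} s_(V,W)(i,j) · ⟦(V_i)^k (W_j)^l⟧`, `(i,j)` a representative of `C`
(only classes of linking pairs contribute, since the sign vanishes elsewhere). -/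
noncomputable def combSumPow {S : Type*} [Inhabited S] [LinearOrder (S × Bool)]
    (V W : List (S × Bool)) (k l : ℕ) : ConjClasses (FreeGroup S) →₀ ℤ :=
  if h : V.length = 0 ∨ W.length = 0 then 0
  else
    haveI : NeZero V.length := ⟨fun hh => h (Or.inl hh)⟩
    haveI : NeZero W.length := ⟨fun hh => h (Or.inr hh)⟩
    haveI : Fintype (Quotient (Relation.EqvGen.setoid (Step pbar V W))) := Fintype.ofFinite _
    ∑ C : Quotient (Relation.EqvGen.setoid (Step pbar V W)),
      Finsupp.single
        (ConjClasses.mk (FreeGroup.mk (wpow (rotZ V C.out.1) k ++ wpow (rotZ W C.out.2) l)))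
        (sgn pbar V W C.out.1 C.out.2)

section OrderCore

variable {β : Type*}

/-- A strict total order (as a bare relation). -/
def STO (lt : β → β → Prop) : Prop :=
  (∀ a, ¬ lt a a) ∧ (∀ ⦃a b c⦄, lt a b → lt b c → lt a c) ∧
    (∀ ⦃a b⦄, a ≠ b → lt a b ∨ lt b a)

namespace STO

variable {lt : β → β → Prop}

theorem irrefl (h : STO lt) (a : β) : ¬ lt a a := h.1 a
theorem trans (h : STO lt) {a b c : β} : lt a b → lt b c → lt a c := fun x y => h.2.1 x y
theorem total (h : STO lt) {a b : β} (hne : a ≠ b) : lt a b ∨ lt b a := h.2.2 hne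
theorem asymm (h : STO lt) {a b : β} (hab : lt a b) : ¬ lt b a :=
  fun hba => h.1 a (h.trans hab hba)
theorem ne (h : STO lt) {a b : β} (hab : lt a b) : a ≠ b :=
  fun e => h.1 a (e ▸ hab)
theorem lt_of_not (h : STO lt) {a b : β} (hne : a ≠ b) (hnl : ¬ lt a b) : lt b a :=
  (h.total hne).resolve_left hnl

end STO

/-- Rotation of a strict order at a cut given by `P` (the `P`-block moves to the bottom). -/
def rotLT (P : β → Prop) (lt : β → β → Prop) : β → β → Prop :=
  fun u v => (P u ∧ ¬ P v) ∨ ((P u ↔ P v) ∧ lt u v)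

theorem STO.rotLT {lt : β → β → Prop} (h : STO lt) (P : β → Prop) :
    STO (rotLT P lt) := by
  refine ⟨fun a => ?_, fun a b c hab hbc => ?_, fun a b hne => ?_⟩
  · rintro (⟨h1, h2⟩ | ⟨_, h2⟩)
    · exact h2 h1
    · exact h.1 _ h2
  · rcases hab with ⟨pa, pb⟩ | ⟨e1, l1⟩ <;> rcases hbc with ⟨pb', pc⟩ | ⟨e2, l2⟩
    · exact absurd pb' pb
    · exact Or.inl ⟨pa, fun pc => pb (e2.2 pc)⟩
    · exact Or.inl ⟨e1.2 pb', pc⟩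
    · exact Or.inr ⟨e1.trans e2, h.2.1 l1 l2⟩
  · by_cases pa : P a <;> by_cases pb : P b
    · rcases h.2.2 hne with hl | hl
      exacts [Or.inl (Or.inr ⟨iff_of_true pa pb, hl⟩),
        Or.inr (Or.inr ⟨iff_of_true pb pa, hl⟩)]
    · exact Or.inl (Or.inl ⟨pa, pb⟩)
    · exact Or.inr (Or.inl ⟨pb, pa⟩)
    · rcases h.2.2 hne with hl | hl
      exacts [Or.inl (Or.inr ⟨iff_of_false pa pb, hl⟩),
        Or.inr (Or.inr ⟨iff_of_false pb pa, hl⟩)]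

theorem LinOrd4.rev {lt : β → β → Prop} {a b c d : β} :
    LinOrd4 lt d c b a ↔ LinOrd4 lt a b c d := by
  unfold LinOrd4
  constructor <;> rintro (⟨h1, h2, h3⟩ | ⟨h1, h2, h3⟩)
  exacts [Or.inr ⟨h1, h2, h3⟩, Or.inl ⟨h1, h2, h3⟩, Or.inr ⟨h1, h2, h3⟩, Or.inl ⟨h1, h2, h3⟩]

theorem CycOrd4.rotate {lt : β → β → Prop} {a b c d : β} :
    CycOrd4 lt a b c d ↔ CycOrd4 lt b c d a := by
  unfold CycOrd4
  constructor <;> rintro (h | h | h | h)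
  exacts [Or.inr (Or.inr (Or.inr h)), Or.inl h, Or.inr (Or.inl h),
    Or.inr (Or.inr (Or.inl h)), Or.inr (Or.inl h), Or.inr (Or.inr (Or.inl h)),
    Or.inr (Or.inr (Or.inr h)), Or.inl h]

theorem CycOrd4.rev {lt : β → β → Prop} {a b c d : β} :
    CycOrd4 lt d c b a ↔ CycOrd4 lt a b c d := by
  unfold CycOrd4
  rw [show LinOrd4 lt d c b a ↔ LinOrd4 lt a b c d from LinOrd4.rev,
    show LinOrd4 lt c b a d ↔ LinOrd4 lt d a b c from LinOrd4.rev,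
    show LinOrd4 lt b a d c ↔ LinOrd4 lt c d a b from LinOrd4.rev,
    show LinOrd4 lt a d c b ↔ LinOrd4 lt b c d a from LinOrd4.rev]
  constructor <;> rintro (h | h | h | h)
  exacts [Or.inl h, Or.inr (Or.inr (Or.inr h)), Or.inr (Or.inr (Or.inl h)),
    Or.inr (Or.inl h), Or.inl h, Or.inr (Or.inr (Or.inr h)),
    Or.inr (Or.inr (Or.inl h)), Or.inr (Or.inl h)]

theorem CycOrd4.distinct {lt : β → β → Prop} (h : STO lt) {a b c d : β}
    (hc : CycOrd4 lt a b c d) :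
    a ≠ b ∧ a ≠ c ∧ a ≠ d ∧ b ≠ c ∧ b ≠ d ∧ c ≠ d := by
  have key : ∀ x y z w : β, lt x y → lt y z → lt z w →
      (x ≠ y ∧ x ≠ z ∧ x ≠ w ∧ y ≠ z ∧ y ≠ w ∧ z ≠ w) := by
    intro x y z w h1 h2 h3
    exact ⟨h.ne h1, h.ne (h.trans h1 h2), h.ne (h.trans h1 (h.trans h2 h3)),
      h.ne h2, h.ne (h.trans h2 h3), h.ne h3⟩
  rcases hc with (⟨h1,h2,h3⟩|⟨h1,h2,h3⟩) | (⟨h1,h2,h3⟩|⟨h1,h2,h3⟩) |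
    (⟨h1,h2,h3⟩|⟨h1,h2,h3⟩) | (⟨h1,h2,h3⟩|⟨h1,h2,h3⟩) <;>
    [ (have := key _ _ _ _ h1 h2 h3);  (have := key _ _ _ _ h1 h2 h3);
      (have := key _ _ _ _ h1 h2 h3);  (have := key _ _ _ _ h1 h2 h3);
      (have := key _ _ _ _ h1 h2 h3);  (have := key _ _ _ _ h1 h2 h3);
      (have := key _ _ _ _ h1 h2 h3);  (have := key _ _ _ _ h1 h2 h3)] <;>
    tauto

section RotMain

variable {lt : β → β → Prop} {P : β → Prop}

theorem chain4_rotLT (h : STO lt) (hup : ∀ ⦃u v⦄, lt u v → P u → P v) {w x y z : β}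
    (h1 : rotLT P lt w x) (h2 : rotLT P lt x y) (h3 : rotLT P lt y z) :
    CycOrd4 lt w x y z := by
  have hs := h.rotLT P
  have cross : ∀ u v : β, ¬ P u → P v → u ≠ v → lt u v := fun u v hu hv hne =>
    (h.total hne).resolve_right (fun hl => hu (hup hl hv))
  have flat : ∀ u v : β, rotLT P lt u v → (P u ↔ P v) → lt u v := by
    rintro u v (⟨p1, p2⟩ | ⟨_, hl⟩) hiff
    · exact absurd (hiff.1 p1) p2
    · exact hl
  have nf : ∀ u v : β, rotLT P lt u v → P u ∨ ¬ P v := by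
    rintro u v (⟨p1, _⟩ | ⟨hiff, _⟩)
    · exact Or.inl p1
    · by_cases pu : P u
      · exact Or.inl pu
      · exact Or.inr (fun pv => pu (hiff.2 pv))
  have nwy : w ≠ y := hs.ne (hs.trans h1 h2)
  have nwz : w ≠ z := hs.ne (hs.trans h1 (hs.trans h2 h3))
  have nxz : x ≠ z := hs.ne (hs.trans h2 h3)
  have nzw : z ≠ w := nwz.symm
  by_cases pw : P w <;> by_cases px : P x <;> by_cases py : P y <;> by_cases pz : P z <;>
    [skip; skip; skip; skip; skip; skip; skip; skip; skip; skip; skip; skip; skip; skip;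
     skip; skip]
  -- 1111
  · exact Or.inl (Or.inl ⟨flat _ _ h1 (iff_of_true pw px), flat _ _ h2 (iff_of_true px py),
      flat _ _ h3 (iff_of_true py pz)⟩)
  -- 1110
  · exact Or.inr (Or.inr (Or.inr (Or.inl ⟨cross _ _ pz pw nzw,
      flat _ _ h1 (iff_of_true pw px), flat _ _ h2 (iff_of_true px py)⟩)))
  · exact absurd ((nf _ _ h3).resolve_left py) (fun hh => hh pz)
  -- 1100
  · exact Or.inr (Or.inr (Or.inl (Or.inl ⟨flat _ _ h3 (iff_of_false py pz),
      cross _ _ pz pw nzw, flat _ _ h1 (iff_of_true pw px)⟩)))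
  -- 1011
  · exact absurd ((nf _ _ h2).resolve_left px) (fun hh => hh py)
  -- 1010
  · exact absurd ((nf _ _ h2).resolve_left px) (fun hh => hh py)
  -- 1001
  · exact absurd ((nf _ _ h3).resolve_left py) (fun hh => hh pz)
  -- 1000
  · exact Or.inr (Or.inl (Or.inl ⟨flat _ _ h2 (iff_of_false px py),
      flat _ _ h3 (iff_of_false py pz), cross _ _ pz pw nzw⟩))
  -- 0111
  · exact absurd ((nf _ _ h1).resolve_left pw) (fun hh => hh px)
  -- 0110
  · exact absurd ((nf _ _ h1).resolve_left pw) (fun hh => hh px)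
  -- 0101
  · exact absurd ((nf _ _ h1).resolve_left pw) (fun hh => hh px)
  -- 0100
  · exact absurd ((nf _ _ h1).resolve_left pw) (fun hh => hh px)
  -- 0011
  · exact absurd ((nf _ _ h2).resolve_left px) (fun hh => hh py)
  -- 0010
  · exact absurd ((nf _ _ h2).resolve_left px) (fun hh => hh py)
  -- 0001
  · exact absurd ((nf _ _ h3).resolve_left py) (fun hh => hh pz)
  -- 0000
  · exact Or.inl (Or.inl ⟨flat _ _ h1 (iff_of_false pw px), flat _ _ h2 (iff_of_false px py),
      flat _ _ h3 (iff_of_false py pz)⟩)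

theorem chain4_to_rotLT (h : STO lt) (hup : ∀ ⦃u v⦄, lt u v → P u → P v) {w x y z : β}
    (h1 : lt w x) (h2 : lt x y) (h3 : lt y z) :
    CycOrd4 (rotLT P lt) w x y z := by
  have nwy : w ≠ y := h.ne (h.trans h1 h2)
  have nwz : w ≠ z := h.ne (h.trans h1 (h.trans h2 h3))
  have nxz : x ≠ z := h.ne (h.trans h2 h3)
  have flat : ∀ u v : β, lt u v → (P u ↔ P v) → rotLT P lt u v := fun u v hl hiff =>
    Or.inr ⟨hiff, hl⟩
  have cross : ∀ u v : β, P u → ¬ P v → rotLT P lt u v := fun u v hu hv => Or.inl ⟨hu, hv⟩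
  have nf : ∀ u v : β, lt u v → P u → P v := fun u v hl hu => hup hl hu
  by_cases pw : P w <;> by_cases px : P x <;> by_cases py : P y <;> by_cases pz : P z <;>
    [skip; skip; skip; skip; skip; skip; skip; skip; skip; skip; skip; skip; skip; skip;
     skip; skip]
  -- 1111
  · exact Or.inl (Or.inl ⟨flat _ _ h1 (iff_of_true pw px), flat _ _ h2 (iff_of_true px py),
      flat _ _ h3 (iff_of_true py pz)⟩)
  -- 1110
  · exact absurd (nf _ _ h3 py) pz
  -- 1101
  · exact absurd (nf _ _ h2 px) py
  -- 1100
  · exact absurd (nf _ _ h2 px) py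
  -- 1011
  · exact absurd (nf _ _ h1 pw) px
  -- 1010
  · exact absurd (nf _ _ h1 pw) px
  -- 1001
  · exact absurd (nf _ _ h1 pw) px
  -- 1000
  · exact absurd (nf _ _ h1 pw) px
  -- 0111
  · exact Or.inr (Or.inl (Or.inl ⟨flat _ _ h2 (iff_of_true px py),
      flat _ _ h3 (iff_of_true py pz), cross _ _ pz pw⟩))
  -- 0110
  · exact absurd (nf _ _ h3 py) pz
  -- 0101
  · exact absurd (nf _ _ h2 px) py
  -- 0100
  · exact absurd (nf _ _ h2 px) py
  -- 0011
  · exact Or.inr (Or.inr (Or.inl (Or.inl ⟨flat _ _ h3 (iff_of_true py pz),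
      cross _ _ pz pw, flat _ _ h1 (iff_of_false pw px)⟩)))
  -- 0010
  · exact absurd (nf _ _ h3 py) pz
  -- 0001
  · exact Or.inr (Or.inr (Or.inr (Or.inl ⟨cross _ _ pz pw,
      flat _ _ h1 (iff_of_false pw px), flat _ _ h2 (iff_of_false px py)⟩)))
  -- 0000
  · exact Or.inl (Or.inl ⟨flat _ _ h1 (iff_of_false pw px), flat _ _ h2 (iff_of_false px py),
      flat _ _ h3 (iff_of_false py pz)⟩)

theorem cycOrd4_rotLT (h : STO lt) (hup : ∀ ⦃u v⦄, lt u v → P u → P v) {a b c d : β} :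
    CycOrd4 (rotLT P lt) a b c d ↔ CycOrd4 lt a b c d := by
  constructor
  · rintro ((⟨h1, h2, h3⟩ | ⟨h1, h2, h3⟩) | (⟨h1, h2, h3⟩ | ⟨h1, h2, h3⟩) |
      (⟨h1, h2, h3⟩ | ⟨h1, h2, h3⟩) | (⟨h1, h2, h3⟩ | ⟨h1, h2, h3⟩))
    · exact chain4_rotLT h hup h1 h2 h3
    · exact CycOrd4.rev.1 (chain4_rotLT h hup h1 h2 h3)
    · exact CycOrd4.rotate.2 (chain4_rotLT h hup h1 h2 h3)
    · exact CycOrd4.rotate.2 ((CycOrd4.rev (a := b) (b := c) (c := d) (d := a)).1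
        (chain4_rotLT h hup h1 h2 h3))
    · exact CycOrd4.rotate.2 (CycOrd4.rotate.2 (chain4_rotLT h hup h1 h2 h3))
    · exact CycOrd4.rotate.2 (CycOrd4.rotate.2 ((CycOrd4.rev (a := c) (b := d) (c := a)
        (d := b)).1 (chain4_rotLT h hup h1 h2 h3)))
    · exact CycOrd4.rotate.1 (chain4_rotLT h hup h1 h2 h3)
    · exact CycOrd4.rotate.1 ((CycOrd4.rev (a := d) (b := a) (c := b) (d := c)).1
        (chain4_rotLT h hup h1 h2 h3))
  · rintro ((⟨h1, h2, h3⟩ | ⟨h1, h2, h3⟩) | (⟨h1, h2, h3⟩ | ⟨h1, h2, h3⟩) |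
      (⟨h1, h2, h3⟩ | ⟨h1, h2, h3⟩) | (⟨h1, h2, h3⟩ | ⟨h1, h2, h3⟩))
    · exact chain4_to_rotLT h hup h1 h2 h3
    · exact CycOrd4.rev.1 (chain4_to_rotLT h hup h1 h2 h3)
    · exact CycOrd4.rotate.2 (chain4_to_rotLT h hup h1 h2 h3)
    · exact CycOrd4.rotate.2 ((CycOrd4.rev (a := b) (b := c) (c := d) (d := a)).1
        (chain4_to_rotLT h hup h1 h2 h3))
    · exact CycOrd4.rotate.2 (CycOrd4.rotate.2 (chain4_to_rotLT h hup h1 h2 h3))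
    · exact CycOrd4.rotate.2 (CycOrd4.rotate.2 ((CycOrd4.rev (a := c) (b := d) (c := a)
        (d := b)).1 (chain4_to_rotLT h hup h1 h2 h3)))
    · exact CycOrd4.rotate.1 (chain4_to_rotLT h hup h1 h2 h3)
    · exact CycOrd4.rotate.1 ((CycOrd4.rev (a := d) (b := a) (c := b) (d := c)).1
        (chain4_to_rotLT h hup h1 h2 h3))

theorem cycOrd4_congr {lt1 lt2 : β → β → Prop} {a b c d : β}
    (h : ∀ u v : β, lt1 u v ↔ lt2 u v) :
    CycOrd4 lt1 a b c d ↔ CycOrd4 lt2 a b c d := by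
  unfold CycOrd4 LinOrd4
  simp only [h]

end RotMain

end OrderCore

section HwOrder

variable [LinearOrder α] {bar : α → α}

theorem sto_lt : STO ((· < ·) : α → α → Prop) :=
  ⟨lt_irrefl, fun _ _ _ h1 h2 => lt_trans h1 h2, fun _ _ h => lt_or_gt_of_ne h⟩

theorem cycLT_iff (x a b : α) : cycLT x a b ↔ rotLT (fun t => x ≤ t) (· < ·) a b := by
  unfold cycLT rotLT
  by_cases h1 : x ≤ a <;> by_cases h2 : x ≤ b
  · rw [if_pos (Or.inl ⟨h1, h2⟩)]
    simp [h1, h2]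
  · rw [if_neg]
    · simp [h1, h2, not_le.1 h2]
    · rintro (⟨_, hc⟩ | ⟨hc, _⟩) <;> [exact h2 hc; exact absurd h1 (not_le.2 hc)]
  · rw [if_neg]
    · simp [h1, h2]
    · rintro (⟨hc, _⟩ | ⟨_, hc⟩) <;> [exact h1 hc; exact absurd h2 (not_le.2 hc)]
  · rw [if_pos (Or.inr ⟨not_le.1 h1, not_le.1 h2⟩)]
    simp [h1, h2]

theorem sto_cycLT (x : α) : STO (cycLT x) := by
  have : cycLT x = rotLT (fun t => x ≤ t) (· < ·) := by
    funext a b; exact propext (cycLT_iff x a b)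
  rw [this]; exact sto_lt.rotLT _

theorem cycLT_self_left {x b : α} (h : x ≠ b) : cycLT x x b := by
  rw [cycLT_iff]
  by_cases hb : x ≤ b
  · exact Or.inr ⟨iff_of_true le_rfl hb, lt_of_le_of_ne hb h⟩
  · exact Or.inl ⟨le_rfl, hb⟩

theorem not_cycLT_self_right (x a : α) : ¬ cycLT x a x := by
  rw [cycLT_iff]
  rintro (⟨_, h⟩ | ⟨hiff, h⟩)
  · exact h le_rfl
  · exact absurd (hiff.2 le_rfl) (not_le.2 h)

/-- `hwG bar lt0`: order on half-infinite words with base order `lt0` at position 0. -/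
def hwG (bar : α → α) (lt0 : α → α → Prop) (T U : ℕ → α) : Prop :=
  lt0 (T 0) (U 0) ∨ ∃ j : ℕ, (∀ i ≤ j, T i = U i) ∧ cycLT (bar (T j)) (T (j + 1)) (U (j + 1))

theorem hwLT_eq_hwG : hwLT bar = hwG bar (· < ·) := rfl

/-- `hwP bar p`: the order on half-infinite words cut at first letter `p`. -/
def hwP (bar : α → α) (p : α) : (ℕ → α) → (ℕ → α) → Prop := hwG bar (cycLT p)

variable {lt0 : α → α → Prop} {T U S : ℕ → α}

theorem hwG_head_ne (hne : T 0 ≠ U 0) : hwG bar lt0 T U ↔ lt0 (T 0) (U 0) := by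
  constructor
  · rintro (h | ⟨j, hag, _⟩)
    · exact h
    · exact absurd (hag 0 (Nat.zero_le j)) hne
  · exact Or.inl

theorem hwG_head_eq (hirr : ∀ a, ¬ lt0 a a) (he : T 0 = U 0) :
    hwG bar lt0 T U ↔ hwP bar (bar (T 0)) (fun t => T (t + 1)) (fun t => U (t + 1)) := by
  unfold hwP hwG
  constructor
  · rintro (h | ⟨j, hag, hc⟩)
    · rw [he] at h; exact absurd h (hirr _)
    · cases j with
      | zero => exact Or.inl hc
      | succ j =>
        refine Or.inr ⟨j, fun i hi => hag (i + 1) (by omega), ?_⟩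
        have : T (j + 1) = U (j + 1) := hag (j + 1) (by omega)
        exact hc
  · rintro (h | ⟨j, hag, hc⟩)
    · refine Or.inr ⟨0, fun i hi => ?_, h⟩
      interval_cases i
      exact he
    · refine Or.inr ⟨j + 1, fun i hi => ?_, hc⟩
      cases i with
      | zero => exact he
      | succ i => exact hag i (by omega)

theorem hwG_irrefl (hirr : ∀ a, ¬ lt0 a a) (T : ℕ → α) : ¬ hwG bar lt0 T T := by
  rintro (h | ⟨j, _, hc⟩)
  · exact hirr _ h
  · exact (sto_cycLT _).irrefl _ hc

theorem hwG_ne (hirr : ∀ a, ¬ lt0 a a) (h : hwG bar lt0 T U) : T ≠ U := by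
  rintro rfl; exact hwG_irrefl hirr T h

private theorem hwG_find (h0 : STO lt0) {hx : ∃ n, T n ≠ U n} (h : hwG bar lt0 T U) :
    (Nat.find hx = 0 ∧ lt0 (T 0) (U 0)) ∨
      (∃ e, Nat.find hx = e + 1 ∧ cycLT (bar (T e)) (T (e + 1)) (U (e + 1))) := by
  rcases h with h | ⟨j, hag, hc⟩
  · exact Or.inl ⟨(Nat.find_eq_zero hx).2 (fun e => h0.1 _ (e ▸ h)), h⟩
  · refine Or.inr ⟨j, ?_, hc⟩
    have hne1 : T (j + 1) ≠ U (j + 1) := (sto_cycLT _).ne hc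
    rw [Nat.find_eq_iff]
    exact ⟨hne1, fun i hi => not_not_intro (hag i (by omega))⟩

theorem hwG_total (h0 : STO lt0) (hne : T ≠ U) : hwG bar lt0 T U ∨ hwG bar lt0 U T := by
  have hx : ∃ n, T n ≠ U n := Function.ne_iff.1 hne
  have hmin : ∀ i < Nat.find hx, T i = U i := fun i hi => not_not.1 (Nat.find_min hx hi)
  have hspec : T (Nat.find hx) ≠ U (Nat.find hx) := Nat.find_spec hx
  cases hd : Nat.find hx with
  | zero =>
    rw [hd] at hspec
    rcases h0.total hspec with h | h
    · exact Or.inl (Or.inl h)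
    · exact Or.inr (Or.inl h)
  | succ e =>
    rw [hd] at hspec hmin
    have hag : ∀ i ≤ e, T i = U i := fun i hi => hmin i (by omega)
    rcases (sto_cycLT (bar (T e))).total hspec with h | h
    · exact Or.inl (Or.inr ⟨e, hag, h⟩)
    · refine Or.inr (Or.inr ⟨e, fun i hi => (hag i hi).symm, ?_⟩)
      rwa [← hag e le_rfl]

theorem hwG_asymm (h0 : STO lt0) (h1 : hwG bar lt0 T U) (h2 : hwG bar lt0 U T) : False := by
  have hne : T ≠ U := hwG_ne h0.1 h1
  have hx : ∃ n, T n ≠ U n := Function.ne_iff.1 hne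
  have hy : ∃ n, U n ≠ T n := hx.imp (fun n h => h.symm)
  have hfind : Nat.find hx = Nat.find hy := by
    congr 1
    · funext n; exact propext ⟨fun h => h.symm, fun h => h.symm⟩
  have hmin : ∀ i < Nat.find hx, T i = U i := fun i hi => not_not.1 (Nat.find_min hx hi)
  rcases hwG_find h0 h1 (hx := hx) with ⟨hd1, hl1⟩ | ⟨e1, hd1, hl1⟩ <;>
    rcases hwG_find h0 h2 (hx := hy) with ⟨hd2, hl2⟩ | ⟨e2, hd2, hl2⟩
  · exact h0.1 _ (h0.trans hl1 hl2)
  · omega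
  · omega
  · have he : e1 = e2 := by omega
    subst he
    have heq : U e1 = T e1 := (hmin e1 (by omega)).symm
    rw [heq] at hl2
    exact (sto_cycLT _).irrefl _ ((sto_cycLT _).trans hl1 hl2)

theorem hwG_trans (h0 : STO lt0) (h1 : hwG bar lt0 T U) (h2 : hwG bar lt0 U S) :
    hwG bar lt0 T S := by
  have hTU : T ≠ U := hwG_ne h0.1 h1
  have hUS : U ≠ S := hwG_ne h0.1 h2
  by_cases hTS : T = S
  · subst hTS
    exact (hwG_asymm h0 h1 h2).elim
  have hx : ∃ n, T n ≠ U n := Function.ne_iff.1 hTU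
  have hy : ∃ n, U n ≠ S n := Function.ne_iff.1 hUS
  have hminx : ∀ i < Nat.find hx, T i = U i := fun i hi => not_not.1 (Nat.find_min hx hi)
  have hminy : ∀ i < Nat.find hy, U i = S i := fun i hi => not_not.1 (Nat.find_min hy hi)
  rcases lt_trichotomy (Nat.find hx) (Nat.find hy) with hlt | heq | hgt
  · rcases hwG_find h0 h1 (hx := hx) with ⟨hd1, hl1⟩ | ⟨e1, hd1, hl1⟩
    · exact Or.inl (by rwa [hminy 0 (by omega)] at hl1)
    · refine Or.inr ⟨e1, fun i hi => (hminx i (by omega)).trans (hminy i (by omega)), ?_⟩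
      rwa [hminy (e1 + 1) (by omega)] at hl1
  · rcases hwG_find h0 h1 (hx := hx) with ⟨hd1, hl1⟩ | ⟨e1, hd1, hl1⟩ <;>
      rcases hwG_find h0 h2 (hx := hy) with ⟨hd2, hl2⟩ | ⟨e2, hd2, hl2⟩
    · exact Or.inl (h0.trans hl1 hl2)
    · omega
    · omega
    · have he : e1 = e2 := by omega
      subst he
      have heq1 : U e1 = T e1 := (hminx e1 (by omega)).symm
      rw [heq1] at hl2
      refine Or.inr ⟨e1, fun i hi => (hminx i (by omega)).trans (hminy i (by omega)), ?_⟩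
      exact (sto_cycLT _).trans hl1 hl2
  · rcases hwG_find h0 h2 (hx := hy) with ⟨hd2, hl2⟩ | ⟨e2, hd2, hl2⟩
    · refine Or.inl ?_
      rwa [← hminx 0 (by omega)] at hl2
    · refine Or.inr ⟨e2, fun i hi => (hminx i (by omega)).trans (hminy i (by omega)), ?_⟩
      rw [← hminx e2 (by omega), ← hminx (e2 + 1) (by omega)] at hl2
      exact hl2

theorem sto_hwG (h0 : STO lt0) : STO (hwG (α := α) bar lt0) :=
  ⟨hwG_irrefl h0.1, fun _ _ _ h1 h2 => hwG_trans h0 h1 h2, fun _ _ h => hwG_total h0 h⟩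

theorem sto_hwLT : STO (hwLT bar) := by rw [hwLT_eq_hwG]; exact sto_hwG sto_lt

theorem sto_hwP (p : α) : STO (hwP bar p) := sto_hwG (sto_cycLT p)

theorem hwLT_head_le (h : hwLT bar T U) : T 0 ≤ U 0 := by
  rcases h with h | ⟨j, hag, _⟩
  · exact h.le
  · exact (hag 0 (Nat.zero_le j)).le

theorem hwP_eq_rotLT (p : α) (T U : ℕ → α) :
    hwP bar p T U ↔ rotLT (fun T => p ≤ T 0) (hwLT bar) T U := by
  by_cases he : T 0 = U 0
  · constructor
    · rintro (h | hj)
      · rw [he] at h; exact absurd h ((sto_cycLT p).irrefl _)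
      · exact Or.inr ⟨by show p ≤ T 0 ↔ p ≤ U 0; rw [he], Or.inr hj⟩
    · rintro (⟨h1, h2⟩ | ⟨_, h | hj⟩)
      · exact absurd (he ▸ h1 : p ≤ U 0) h2
      · rw [he] at h; exact absurd h (lt_irrefl _)
      · exact Or.inr hj
  · rw [show (hwP bar p T U) ↔ cycLT p (T 0) (U 0) from hwG_head_ne he, cycLT_iff]
    unfold rotLT
    rw [show (hwLT bar T U) ↔ T 0 < U 0 from hwG_head_ne he]

end HwOrder

section Gmul

variable [LinearOrder α] {bar : α → α}

theorem cycOrd4_congr4 {β : Type*} {lt1 lt2 : β → β → Prop} {a b c d : β}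
    (hab : lt1 a b ↔ lt2 a b) (hba : lt1 b a ↔ lt2 b a)
    (hbc : lt1 b c ↔ lt2 b c) (hcb : lt1 c b ↔ lt2 c b)
    (hcd : lt1 c d ↔ lt2 c d) (hdc : lt1 d c ↔ lt2 d c)
    (hda : lt1 d a ↔ lt2 d a) (had : lt1 a d ↔ lt2 a d) :
    CycOrd4 lt1 a b c d ↔ CycOrd4 lt2 a b c d := by
  unfold CycOrd4 LinOrd4
  rw [hab, hba, hbc, hcb, hcd, hdc, hda, had]

/-- Prepend a letter to a half-infinite word. -/
def consW (x : α) (T : ℕ → α) : ℕ → α := fun t => match t with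
  | 0 => x
  | (s + 1) => T s

/-- Remove the first letter of a half-infinite word. -/
def tailW (T : ℕ → α) : ℕ → α := fun t => T (t + 1)

/-- A half-infinite word is reduced. -/
def RedW (bar : α → α) (T : ℕ → α) : Prop := ∀ t, T (t + 1) ≠ bar (T t)

/-- Left multiplication by the letter `x` on half-infinite reduced words. -/
def gmul (bar : α → α) (x : α) (T : ℕ → α) : ℕ → α :=
  if T 0 = bar x then tailW T else consW x T

theorem RedW.tailW {T : ℕ → α} (hT : RedW bar T) : RedW bar (tailW T) :=
  fun t => hT (t + 1)

theorem RedW.consW {T : ℕ → α} (hT : RedW bar T) {x : α} (hx : T 0 ≠ bar x) :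
    RedW bar (consW x T) := by
  intro t
  cases t with
  | zero => exact hx
  | succ t => exact hT t

theorem RedW.gmul {T : ℕ → α} (hT : RedW bar T) (x : α) : RedW bar (gmul bar x T) := by
  unfold GoldmanPaper.gmul
  split_ifs with h
  · exact hT.tailW
  · exact hT.consW h

theorem hwP_head_ne {q : α} {T U : ℕ → α} (hne : T 0 ≠ U 0) :
    hwP bar q T U ↔ cycLT q (T 0) (U 0) :=
  hwG_head_ne hne

theorem hwG_cons {lt0 : α → α → Prop} (hirr : ∀ a, ¬ lt0 a a) (x : α) (T U : ℕ → α) :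
    hwG bar lt0 (consW x T) (consW x U) ↔ hwP bar (bar x) T U :=
  hwG_head_eq hirr rfl

theorem hwP_cons (q x : α) (T U : ℕ → α) :
    hwP bar q (consW x T) (consW x U) ↔ hwP bar (bar x) T U :=
  hwG_cons ((sto_cycLT q).irrefl) x T U

theorem hwP_tail (q : α) {T U : ℕ → α} (he : T 0 = U 0) :
    hwP bar q T U ↔ hwP bar (bar (T 0)) (tailW T) (tailW U) :=
  hwG_head_eq ((sto_cycLT q).irrefl) he

theorem hwP_ne_head {q : α} {T U : ℕ → α} (h : hwP bar q T U) (hU0 : U 0 = q) : T 0 = q := by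
  rcases h with h | ⟨j, hag, _⟩
  · rw [hU0] at h; exact absurd h (not_cycLT_self_right _ _)
  · exact (hag 0 (Nat.zero_le j)).trans hU0

theorem gmul_atom (hinv : ∀ a, bar (bar a) = a) {x : α} {T U : ℕ → α}
    (hT : RedW bar T) (hU : RedW bar U) :
    hwP bar x (gmul bar x T) (gmul bar x U) ↔
      rotLT (fun T => ¬ (T 0 = bar x)) (hwP bar (bar x)) T U := by
  unfold gmul
  by_cases hT0 : T 0 = bar x <;> by_cases hU0 : U 0 = bar x
  · rw [if_pos hT0, if_pos hU0]
    have h1 := hwP_tail (bar := bar) (q := bar x) (T := T) (U := U) (hT0.trans hU0.symm)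
    rw [hT0, hinv] at h1
    constructor
    · intro h
      exact Or.inr ⟨iff_of_false (not_not_intro hT0) (not_not_intro hU0), h1.2 h⟩
    · rintro (⟨h1', _⟩ | ⟨_, h'⟩)
      · exact absurd hT0 h1'
      · exact h1.1 h'
  · rw [if_pos hT0, if_neg hU0]
    have hne : tailW T 0 ≠ consW x U 0 := by
      show T 1 ≠ x
      have hb : bar (T 0) = x := by rw [hT0, hinv]
      rw [← hb]; exact hT 0
    rw [hwP_head_ne hne]
    constructor
    · intro h
      exact absurd h (not_cycLT_self_right x (T 1))
    · rintro (⟨h1', _⟩ | ⟨hiff, _⟩)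
      · exact absurd hT0 h1'
      · exact absurd hT0 (hiff.2 hU0)
  · rw [if_neg hT0, if_pos hU0]
    have hne : consW x T 0 ≠ tailW U 0 := by
      show x ≠ U 1
      have hb : bar (U 0) = x := by rw [hU0, hinv]
      rw [← hb]; exact fun e => hU 0 e.symm
    rw [hwP_head_ne hne]
    constructor
    · intro _
      exact Or.inl ⟨hT0, not_not_intro hU0⟩
    · intro _
      exact cycLT_self_left hne
  · rw [if_neg hT0, if_neg hU0]
    rw [hwP_cons x x T U]
    constructor
    · intro h
      exact Or.inr ⟨iff_of_true hT0 hU0, h⟩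
    · rintro (⟨_, h2'⟩ | ⟨_, h'⟩)
      · exact absurd hU0 h2'
      · exact h'

theorem cycOrd4_hwP_iff (p : α) {T1 T2 T3 T4 : ℕ → α} :
    CycOrd4 (hwP bar p) T1 T2 T3 T4 ↔ CycOrd4 (hwLT bar) T1 T2 T3 T4 := by
  have h1 : ∀ T U : ℕ → α, hwP bar p T U ↔ rotLT (fun T => p ≤ T 0) (hwLT bar) T U :=
    hwP_eq_rotLT p
  rw [cycOrd4_congr4 (h1 T1 T2) (h1 T2 T1) (h1 T2 T3) (h1 T3 T2) (h1 T3 T4) (h1 T4 T3)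
    (h1 T4 T1) (h1 T1 T4)]
  exact cycOrd4_rotLT sto_hwLT (fun u v hl hu => le_trans hu (hwLT_head_le hl))

theorem cycOrd4_gmul (hinv : ∀ a, bar (bar a) = a) (x : α) {T1 T2 T3 T4 : ℕ → α}
    (h1 : RedW bar T1) (h2 : RedW bar T2) (h3 : RedW bar T3) (h4 : RedW bar T4) :
    CycOrd4 (hwLT bar) (gmul bar x T1) (gmul bar x T2) (gmul bar x T3) (gmul bar x T4) ↔
      CycOrd4 (hwLT bar) T1 T2 T3 T4 := by
  have step1 : CycOrd4 (hwLT bar) (gmul bar x T1) (gmul bar x T2) (gmul bar x T3)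
      (gmul bar x T4) ↔ CycOrd4 (hwP bar x) (gmul bar x T1) (gmul bar x T2) (gmul bar x T3)
      (gmul bar x T4) := (cycOrd4_hwP_iff x).symm
  have step2 : CycOrd4 (fun T U => hwP bar x (gmul bar x T) (gmul bar x U)) T1 T2 T3 T4 ↔
      CycOrd4 (rotLT (fun T => ¬ (T 0 = bar x)) (hwP bar (bar x))) T1 T2 T3 T4 :=
    cycOrd4_congr4 (gmul_atom hinv h1 h2) (gmul_atom hinv h2 h1) (gmul_atom hinv h2 h3)
      (gmul_atom hinv h3 h2) (gmul_atom hinv h3 h4) (gmul_atom hinv h4 h3)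
      (gmul_atom hinv h4 h1) (gmul_atom hinv h1 h4)
  have step3 : CycOrd4 (rotLT (fun T => ¬ (T 0 = bar x)) (hwP bar (bar x))) T1 T2 T3 T4 ↔
      CycOrd4 (hwP bar (bar x)) T1 T2 T3 T4 :=
    cycOrd4_rotLT (sto_hwP (bar x)) (fun u v hl hu huv => hu (hwP_ne_head hl huv))
  have step2' : CycOrd4 (hwP bar x) (gmul bar x T1) (gmul bar x T2) (gmul bar x T3)
      (gmul bar x T4) ↔
      CycOrd4 (rotLT (fun T => ¬ (T 0 = bar x)) (hwP bar (bar x))) T1 T2 T3 T4 := step2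
  exact step1.trans (step2'.trans (step3.trans (cycOrd4_hwP_iff (bar x))))

end Gmul

section Words

/-! ### Lemmas about `wpow`, `letterZ`, `rotZ` -/

theorem wpow_zero (V : List α) : wpow V 0 = [] := rfl

theorem wpow_succ (V : List α) (k : ℕ) : wpow V (k + 1) = V ++ wpow V k := by
  simp [wpow, List.replicate_succ]

theorem wpow_succ' (V : List α) (k : ℕ) : wpow V (k + 1) = wpow V k ++ V := by
  simp [wpow, List.replicate_succ']

theorem wpow_length (V : List α) (k : ℕ) : (wpow V k).length = k * V.length := by
  induction k with
  | zero => simp [wpow]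
  | succ k ih => rw [wpow_succ, List.length_append, ih]; ring

theorem wpow_ne_nil {V : List α} (hV : V ≠ []) {k : ℕ} (hk : 0 < k) : wpow V k ≠ [] := by
  intro h
  have := congrArg List.length h
  rw [wpow_length] at this
  simp only [List.length_nil] at this
  rcases Nat.mul_eq_zero.1 this with h' | h'
  · omega
  · exact hV (List.length_eq_zero_iff.1 h')

theorem wpow_getD {V : List α} {k r : ℕ} (hr : r < k * V.length) :
    (wpow V k).getD r default = V.getD (r % V.length) default := by
  induction k generalizing r with
  | zero => omega
  | succ k ih =>
    rw [wpow_succ]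
    by_cases h : r < V.length
    · rw [List.getD_append _ _ _ _ h, Nat.mod_eq_of_lt h]
    · have hlen : V.length ≤ r := le_of_not_gt h
      rw [List.getD_append_right _ _ _ _ hlen]
      have hr' : r - V.length < k * V.length := by
        have : r < k * V.length + V.length := by
          calc r < (k + 1) * V.length := hr
          _ = k * V.length + V.length := by ring
        omega
      rw [ih hr']
      congr 1
      conv_rhs => rw [← Nat.sub_add_cancel hlen, Nat.add_mod_right]

theorem wpow_swap (A B : List α) (k : ℕ) :
    wpow (A ++ B) (k + 1) = A ++ wpow (B ++ A) k ++ B := by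
  induction k with
  | zero => simp [wpow]
  | succ k ih =>
    rw [wpow_succ, ih, wpow_succ (B ++ A)]
    simp [List.append_assoc]

theorem wpow_rotate (V : List α) {k : ℕ} (hk : 0 < k) (r : ℕ) :
    (wpow V k).rotate r = wpow (V.rotate (r % V.length)) k := by
  by_cases hV : V = []
  · subst hV; simp [wpow, List.rotate_replicate]
  have hn : 0 < V.length := List.length_pos_iff.2 hV
  obtain ⟨k', rfl⟩ : ∃ k', k = k' + 1 := ⟨k - 1, by omega⟩
  have hfix : ∀ q, (wpow V (k' + 1)).rotate (V.length * q) = wpow V (k' + 1) := by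
    intro q
    induction q with
    | zero => simp
    | succ q ih =>
      rw [Nat.mul_succ, ← List.rotate_rotate, ih]
      rw [List.rotate_eq_drop_append_take (by rw [wpow_length]; nlinarith)]
      rw [wpow_succ, List.drop_left, List.take_left, ← wpow_succ']
      exact (wpow_succ V k').symm
  conv_lhs => rw [← Nat.div_add_mod r V.length, ← List.rotate_rotate, hfix]
  have hsn : r % V.length < V.length := Nat.mod_lt _ hn
  set s := r % V.length with hs
  rw [wpow_succ, List.rotate_eq_drop_append_take
    (by rw [List.length_append, wpow_length]; omega)]
  rw [List.drop_append, List.take_append]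
  rw [show s - V.length = 0 from by omega]
  rw [List.rotate_eq_drop_append_take hsn.le, wpow_swap, List.take_append_drop]
  simp [List.append_assoc]

theorem letterZ_wpow {V : List α} (hV : V ≠ []) {k : ℕ} (hk : 0 < k)
    (a : ZMod (wpow V k).length) :
    letterZ (wpow V k) a = letterZ V ((a.val : ℕ) : ZMod V.length) := by
  haveI : NeZero (wpow V k).length :=
    ⟨fun h => wpow_ne_nil hV hk (List.length_eq_zero_iff.1 h)⟩
  have hval : a.val < k * V.length := by
    have h1 := ZMod.val_lt a
    have h2 := wpow_length V k
    omega
  show (wpow V k).getD a.val default = V.getD ((a.val : ZMod V.length)).val default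
  rw [wpow_getD hval, ZMod.val_natCast]

theorem rotZ_wpow {V : List α} (hV : V ≠ []) {k : ℕ} (hk : 0 < k)
    (a : ZMod (wpow V k).length) :
    rotZ (wpow V k) a = wpow (rotZ V ((a.val : ℕ) : ZMod V.length)) k := by
  show (wpow V k).rotate a.val = wpow (V.rotate ((a.val : ZMod V.length)).val) k
  rw [ZMod.val_natCast, wpow_rotate V hk]

/-! ### ZMod projection lemmas -/

theorem natCast_mod_dvd {n N : ℕ} (h : n ∣ N) (x : ℕ) : ((x % N : ℕ) : ZMod n) = x :=
  (ZMod.natCast_eq_natCast_iff _ _ _).2 (Nat.mod_mod_of_dvd x h)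

theorem zproj_add {n N : ℕ} [NeZero N] (h : n ∣ N) (a b : ZMod N) :
    (((a + b).val : ℕ) : ZMod n) = ((a.val : ℕ) : ZMod n) + ((b.val : ℕ) : ZMod n) := by
  rw [ZMod.val_add, natCast_mod_dvd h, Nat.cast_add]

theorem zproj_natCast {n N : ℕ} (h : n ∣ N) (t : ℕ) :
    ((((t : ZMod N)).val : ℕ) : ZMod n) = (t : ZMod n) := by
  rw [ZMod.val_natCast, natCast_mod_dvd h]

theorem zproj_one {n N : ℕ} (h : n ∣ N) :
    ((((1 : ZMod N)).val : ℕ) : ZMod n) = 1 := by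
  rw [ZMod.val_one_eq_one_mod, natCast_mod_dvd h, Nat.cast_one]

theorem zproj_sub {n N : ℕ} [NeZero N] (h : n ∣ N) (a b : ZMod N) :
    (((a - b).val : ℕ) : ZMod n) = ((a.val : ℕ) : ZMod n) - ((b.val : ℕ) : ZMod n) := by
  have h1 := zproj_add (n := n) h (a - b) b
  rw [sub_add_cancel] at h1
  rw [eq_sub_iff_add_eq, ← h1]

theorem zproj_add_one {n N : ℕ} [NeZero N] (h : n ∣ N) (a : ZMod N) :
    (((a + 1).val : ℕ) : ZMod n) = ((a.val : ℕ) : ZMod n) + 1 := by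
  rw [zproj_add h, zproj_one h]

theorem zproj_sub_one {n N : ℕ} [NeZero N] (h : n ∣ N) (a : ZMod N) :
    (((a - 1).val : ℕ) : ZMod n) = ((a.val : ℕ) : ZMod n) - 1 := by
  rw [zproj_sub h, zproj_one h]

/-! ### Cyclic reducedness, `fwd`, `bwd` -/

theorem letterZ_red {bar : α → α} {V : List α} (hV : CyclicallyReduced bar V)
    (i : ZMod V.length) : letterZ V (i + 1) ≠ bar (letterZ V i) := by
  haveI : NeZero V.length := ⟨fun h => hV.1 (List.length_eq_zero_iff.1 h)⟩
  have hv : i.val < V.length := ZMod.val_lt i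
  show V.getD ((i + 1).val) default ≠ bar (V.getD i.val default)
  have hval : (i + 1).val = (i.val + 1) % V.length := by
    rw [ZMod.val_add, ZMod.val_one_eq_one_mod]
    exact Nat.ModEq.add_left i.val (Nat.mod_mod_of_dvd 1 dvd_rfl)
  by_cases h : i.val + 1 < V.length
  · rw [hval, Nat.mod_eq_of_lt h]
    exact hV.2.1 i.val h
  · have hi : i.val = V.length - 1 := by omega
    have h0 : (i.val + 1) % V.length = 0 := by
      rw [hi, Nat.sub_add_cancel (by omega : 1 ≤ V.length), Nat.mod_self]
    rw [hval, h0, hi]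
    exact hV.2.2

section FwdBwd

variable [LinearOrder α] {bar : α → α} {V W : List α}

theorem fwd_red (hV : CyclicallyReduced bar V) (i : ZMod V.length) : RedW bar (fwd V i) := by
  intro t
  show letterZ V (i + ((t + 1 : ℕ) : ZMod V.length)) ≠ bar (letterZ V (i + (t : ℕ)))
  have harg : (((t + 1 : ℕ)) : ZMod V.length) = ((t : ℕ) : ZMod V.length) + 1 := by
    push_cast; ring
  rw [harg, ← add_assoc]
  exact letterZ_red hV (i + (t : ℕ))

theorem bwd_red (hinv : ∀ a, bar (bar a) = a) (hV : CyclicallyReduced bar V)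
    (i : ZMod V.length) : RedW bar (bwd bar V i) := by
  intro t
  show bar (letterZ V (i - 1 - ((t + 1 : ℕ) : ZMod V.length))) ≠
    bar (bar (letterZ V (i - 1 - ((t : ℕ) : ZMod V.length))))
  rw [hinv]
  intro he
  have harg : (i - 1 - ((t + 1 : ℕ) : ZMod V.length)) + 1 = i - 1 - ((t : ℕ) : ZMod V.length) := by
    push_cast; ring
  have hred := letterZ_red hV (i - 1 - ((t + 1 : ℕ) : ZMod V.length))
  rw [harg] at hred
  exact hred he.symm

theorem fwd_eq_gmul (hV : CyclicallyReduced bar V) (i : ZMod V.length) :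
    fwd V i = gmul bar (letterZ V i) (fwd V (i + 1)) := by
  have hhead : fwd V (i + 1) 0 ≠ bar (letterZ V i) := by
    show letterZ V (i + 1 + ((0 : ℕ) : ZMod V.length)) ≠ bar (letterZ V i)
    rw [show (((0 : ℕ)) : ZMod V.length) = 0 from Nat.cast_zero, add_zero]
    exact letterZ_red hV i
  unfold gmul
  rw [if_neg hhead]
  funext t
  cases t with
  | zero =>
    show letterZ V (i + ((0 : ℕ) : ZMod V.length)) = letterZ V i
    rw [show (((0 : ℕ)) : ZMod V.length) = 0 from Nat.cast_zero, add_zero]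
  | succ t =>
    show letterZ V (i + ((t + 1 : ℕ) : ZMod V.length)) = letterZ V (i + 1 + ((t : ℕ) : ZMod V.length))
    congr 1
    push_cast; ring

theorem bwd_eq_gmul (i : ZMod V.length) :
    bwd bar V i = gmul bar (letterZ V i) (bwd bar V (i + 1)) := by
  have hhead : bwd bar V (i + 1) 0 = bar (letterZ V i) := by
    show bar (letterZ V (i + 1 - 1 - ((0 : ℕ) : ZMod V.length))) = bar (letterZ V i)
    congr 1
    push_cast; ring
  unfold gmul
  rw [if_pos hhead]
  funext t
  show bar (letterZ V (i - 1 - ((t : ℕ) : ZMod V.length))) =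
    bar (letterZ V (i + 1 - 1 - ((t + 1 : ℕ) : ZMod V.length)))
  congr 1
  push_cast; ring

theorem fwd_succ_eq_gmul (hinv : ∀ a, bar (bar a) = a) (j : ZMod W.length) :
    fwd W (j + 1) = gmul bar (bar (letterZ W j)) (fwd W j) := by
  have hhead : fwd W j 0 = bar (bar (letterZ W j)) := by
    show letterZ W (j + ((0 : ℕ) : ZMod W.length)) = bar (bar (letterZ W j))
    rw [hinv, show (((0 : ℕ)) : ZMod W.length) = 0 from Nat.cast_zero, add_zero]
  unfold gmul
  rw [if_pos hhead]
  funext t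
  show letterZ W (j + 1 + ((t : ℕ) : ZMod W.length)) = letterZ W (j + ((t + 1 : ℕ) : ZMod W.length))
  congr 1
  push_cast; ring

theorem bwd_succ_eq_gmul (hinv : ∀ a, bar (bar a) = a) (hW : CyclicallyReduced bar W)
    (j : ZMod W.length) :
    bwd bar W (j + 1) = gmul bar (bar (letterZ W j)) (bwd bar W j) := by
  have hhead : ¬ (bwd bar W j 0 = bar (bar (letterZ W j))) := by
    show ¬ (bar (letterZ W (j - 1 - ((0 : ℕ) : ZMod W.length))) = bar (bar (letterZ W j)))
    rw [hinv, show (((0 : ℕ)) : ZMod W.length) = 0 from Nat.cast_zero, sub_zero]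
    intro he
    have hred := letterZ_red hW (i := j - 1)
    rw [sub_add_cancel] at hred
    exact hred he.symm
  unfold gmul
  rw [if_neg hhead]
  funext t
  cases t with
  | zero =>
    show bar (letterZ W (j + 1 - 1 - ((0 : ℕ) : ZMod W.length))) = bar (letterZ W j)
    congr 1
    push_cast; ring
  | succ t =>
    show bar (letterZ W (j + 1 - 1 - ((t + 1 : ℕ) : ZMod W.length))) =
      bar (letterZ W (j - 1 - ((t : ℕ) : ZMod W.length)))
    congr 1
    push_cast; ring

end FwdBwd

end Words

section SgnLemmas

variable [LinearOrder α] {bar : α → α} {V W : List α}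

theorem sgn_step (hinv : ∀ a, bar (bar a) = a) (hV : CyclicallyReduced bar V)
    (hW : CyclicallyReduced bar W) {p q : ZMod V.length × ZMod W.length}
    (h : Step bar V W p q) : sgn bar V W q.1 q.2 = sgn bar V W p.1 p.2 := by
  obtain ⟨p1, p2⟩ := p
  obtain ⟨q1, q2⟩ := q
  rcases h with ⟨he, hl⟩ | ⟨he, hl⟩ <;> rw [Prod.mk.injEq] at he <;> obtain ⟨rfl, rfl⟩ := he
  · have g1 := fwd_eq_gmul hV p1
    have g2 : fwd W p2 = gmul bar (letterZ V p1) (fwd W (p2 + 1)) := by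
      rw [hl]; exact fwd_eq_gmul hW p2
    have g3 := bwd_eq_gmul (bar := bar) (V := V) p1
    have g4 : bwd bar W p2 = gmul bar (letterZ V p1) (bwd bar W (p2 + 1)) := by
      rw [hl]; exact bwd_eq_gmul p2
    have c1 : CycOrd4 (hwLT bar) (fwd V (p1 + 1)) (fwd W (p2 + 1)) (bwd bar V (p1 + 1))
        (bwd bar W (p2 + 1)) ↔
        CycOrd4 (hwLT bar) (fwd V p1) (fwd W p2) (bwd bar V p1) (bwd bar W p2) := by
      rw [g1, g2, g3, g4]
      exact (cycOrd4_gmul hinv _ (fwd_red hV _) (fwd_red hW _) (bwd_red hinv hV _)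
        (bwd_red hinv hW _)).symm
    have c2 : CycOrd4 (hwLT bar) (fwd V (p1 + 1)) (bwd bar W (p2 + 1)) (bwd bar V (p1 + 1))
        (fwd W (p2 + 1)) ↔
        CycOrd4 (hwLT bar) (fwd V p1) (bwd bar W p2) (bwd bar V p1) (fwd W p2) := by
      rw [g1, g2, g3, g4]
      exact (cycOrd4_gmul hinv _ (fwd_red hV _) (bwd_red hinv hW _) (bwd_red hinv hV _)
        (fwd_red hW _)).symm
    unfold sgn
    classical
    exact if_congr c1 rfl (if_congr c2 rfl rfl)
  · have g1 : fwd V (p1 - 1) = gmul bar (letterZ V (p1 - 1)) (fwd V p1) := by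
      have h1 := fwd_eq_gmul hV (p1 - 1)
      rwa [sub_add_cancel] at h1
    have g2 : fwd W (p2 + 1) = gmul bar (letterZ V (p1 - 1)) (fwd W p2) := by
      rw [hl]; exact fwd_succ_eq_gmul hinv p2
    have g3 : bwd bar V (p1 - 1) = gmul bar (letterZ V (p1 - 1)) (bwd bar V p1) := by
      have h1 := bwd_eq_gmul (bar := bar) (V := V) (p1 - 1)
      rwa [sub_add_cancel] at h1
    have g4 : bwd bar W (p2 + 1) = gmul bar (letterZ V (p1 - 1)) (bwd bar W p2) := by
      rw [hl]; exact bwd_succ_eq_gmul hinv hW p2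
    have c1 : CycOrd4 (hwLT bar) (fwd V (p1 - 1)) (fwd W (p2 + 1)) (bwd bar V (p1 - 1))
        (bwd bar W (p2 + 1)) ↔
        CycOrd4 (hwLT bar) (fwd V p1) (fwd W p2) (bwd bar V p1) (bwd bar W p2) := by
      rw [g1, g2, g3, g4]
      exact cycOrd4_gmul hinv _ (fwd_red hV _) (fwd_red hW _) (bwd_red hinv hV _)
        (bwd_red hinv hW _)
    have c2 : CycOrd4 (hwLT bar) (fwd V (p1 - 1)) (bwd bar W (p2 + 1)) (bwd bar V (p1 - 1))
        (fwd W (p2 + 1)) ↔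
        CycOrd4 (hwLT bar) (fwd V p1) (bwd bar W p2) (bwd bar V p1) (fwd W p2) := by
      rw [g1, g2, g3, g4]
      exact cycOrd4_gmul hinv _ (fwd_red hV _) (bwd_red hinv hW _) (bwd_red hinv hV _)
        (fwd_red hW _)
    unfold sgn
    classical
    exact if_congr c1 rfl (if_congr c2 rfl rfl)

theorem sgn_eqvGen (hinv : ∀ a, bar (bar a) = a) (hV : CyclicallyReduced bar V)
    (hW : CyclicallyReduced bar W) {p q : ZMod V.length × ZMod W.length}
    (h : Relation.EqvGen (Step bar V W) p q) :
    sgn bar V W p.1 p.2 = sgn bar V W q.1 q.2 := by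
  induction h with
  | rel a b hr => exact (sgn_step hinv hV hW hr).symm
  | refl => rfl
  | symm a b _ ih => exact ih.symm
  | trans a b c _ _ ih1 ih2 => exact ih1.trans ih2

theorem sgn_eq_zero_fwd_fwd {i : ZMod V.length} {j : ZMod W.length}
    (h : fwd V i = fwd W j) : sgn bar V W i j = 0 := by
  unfold sgn
  split_ifs with h1 h2
  · exact absurd h (CycOrd4.distinct sto_hwLT h1).1
  · exact absurd h (CycOrd4.distinct sto_hwLT h2).2.2.1
  · rfl

theorem sgn_eq_zero_bwd_fwd {i : ZMod V.length} {j : ZMod W.length}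
    (h : bwd bar V i = fwd W j) : sgn bar V W i j = 0 := by
  unfold sgn
  split_ifs with h1 h2
  · exact absurd h.symm (CycOrd4.distinct sto_hwLT h1).2.2.2.1
  · exact absurd h (CycOrd4.distinct sto_hwLT h2).2.2.2.2.2
  · rfl

theorem fwd_wpow (hVne : V ≠ []) {k : ℕ} (hk : 0 < k) (a : ZMod (wpow V k).length) :
    fwd (wpow V k) a = fwd V ((a.val : ℕ) : ZMod V.length) := by
  haveI : NeZero (wpow V k).length :=
    ⟨fun h => wpow_ne_nil hVne hk (List.length_eq_zero_iff.1 h)⟩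
  have hdvd : V.length ∣ (wpow V k).length := by
    rw [wpow_length]; exact dvd_mul_left _ _
  funext t
  show letterZ (wpow V k) (a + ((t : ℕ) : ZMod (wpow V k).length)) =
    letterZ V (((a.val : ℕ) : ZMod V.length) + ((t : ℕ) : ZMod V.length))
  rw [letterZ_wpow hVne hk]
  congr 1
  rw [zproj_add hdvd, zproj_natCast hdvd]

theorem bwd_wpow (hVne : V ≠ []) {k : ℕ} (hk : 0 < k) (a : ZMod (wpow V k).length) :
    bwd bar (wpow V k) a = bwd bar V ((a.val : ℕ) : ZMod V.length) := by
  haveI : NeZero (wpow V k).length :=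
    ⟨fun h => wpow_ne_nil hVne hk (List.length_eq_zero_iff.1 h)⟩
  have hdvd : V.length ∣ (wpow V k).length := by
    rw [wpow_length]; exact dvd_mul_left _ _
  funext t
  show bar (letterZ (wpow V k) (a - 1 - ((t : ℕ) : ZMod (wpow V k).length))) =
    bar (letterZ V (((a.val : ℕ) : ZMod V.length) - 1 - ((t : ℕ) : ZMod V.length)))
  rw [letterZ_wpow hVne hk]
  congr 2
  rw [zproj_sub hdvd, zproj_sub hdvd, zproj_one hdvd, zproj_natCast hdvd]

theorem sgn_wpow (hVne : V ≠ []) (hWne : W ≠ []) {k l : ℕ} (hk : 0 < k) (hl : 0 < l)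
    (a : ZMod (wpow V k).length) (b : ZMod (wpow W l).length) :
    sgn bar (wpow V k) (wpow W l) a b =
      sgn bar V W ((a.val : ℕ) : ZMod V.length) ((b.val : ℕ) : ZMod W.length) := by
  unfold sgn
  rw [fwd_wpow hVne hk a, fwd_wpow hWne hl b, bwd_wpow hVne hk a, bwd_wpow hWne hl b]

end SgnLemmas

section Dyn

variable {β : Type*} {r : β → β → Prop}

def Functional (r : β → β → Prop) : Prop := ∀ ⦃a b c⦄, r a b → r a c → b = c
def CoFunctional (r : β → β → Prop) : Prop := ∀ ⦃a b c⦄, r b a → r c a → b = c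
def IsTop (r : β → β → Prop) (p : β) : Prop := ∀ q, ¬ r p q

theorem rtg_last_unique (hco : CoFunctional r) {a b c : β}
    (h : Relation.ReflTransGen r a c) (hb : r b c) (hne : a ≠ c) :
    Relation.ReflTransGen r a b := by
  rcases Relation.ReflTransGen.cases_tail h with rfl | ⟨m, hm, hmc⟩
  · exact absurd rfl hne
  · exact (hco hmc hb) ▸ hm

theorem rtg_target_comparable (hco : CoFunctional r) {a b c : β}
    (h1 : Relation.ReflTransGen r a c) (h2 : Relation.ReflTransGen r b c) :
    Relation.ReflTransGen r a b ∨ Relation.ReflTransGen r b a := by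
  induction h1 using Relation.ReflTransGen.head_induction_on with
  | refl => exact Or.inr h2
  | @head x y hxy _ ih =>
    rcases ih with h | h
    · exact Or.inl (Relation.ReflTransGen.head hxy h)
    · by_cases hby : b = y
      · subst hby
        exact Or.inl (Relation.ReflTransGen.single hxy)
      · exact Or.inr (rtg_last_unique hco h hxy hby)

theorem rtg_source_comparable (hfn : Functional r) {a b c : β}
    (h1 : Relation.ReflTransGen r c a) (h2 : Relation.ReflTransGen r c b) :
    Relation.ReflTransGen r a b ∨ Relation.ReflTransGen r b a := by
  have hsw : CoFunctional (Function.swap r) := fun x y z hy hz => hfn hy hz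
  have g1 : Relation.ReflTransGen (Function.swap r) a c := Relation.ReflTransGen.swap a c h1
  have g2 : Relation.ReflTransGen (Function.swap r) b c := Relation.ReflTransGen.swap b c h2
  rcases rtg_target_comparable hsw g1 g2 with h | h
  · exact Or.inr (Relation.ReflTransGen.swap b a h)
  · exact Or.inl (Relation.ReflTransGen.swap a b h)

theorem rtg_to_eqvGen {a b : β} (h : Relation.ReflTransGen r a b) : Relation.EqvGen r a b := by
  induction h with
  | refl => exact Relation.EqvGen.refl _
  | tail _ hr ih => exact Relation.EqvGen.trans _ _ _ ih (Relation.EqvGen.rel _ _ hr)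

theorem eqvGen_iff_rtg (hfn : Functional r) (hco : CoFunctional r) {a b : β} :
    Relation.EqvGen r a b ↔
      Relation.ReflTransGen r a b ∨ Relation.ReflTransGen r b a := by
  constructor
  · intro h
    induction h with
    | rel x y hr => exact Or.inl (Relation.ReflTransGen.single hr)
    | refl x => exact Or.inl Relation.ReflTransGen.refl
    | symm x y _ ih => exact ih.symm
    | trans x y z _ _ ih1 ih2 =>
      rcases ih1 with h1 | h1 <;> rcases ih2 with h2 | h2
      · exact Or.inl (h1.trans h2)
      · exact rtg_target_comparable hco h1 h2
      · exact rtg_source_comparable hfn h1 h2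
      · exact Or.inr (h2.trans h1)
  · rintro (h | h)
    · exact rtg_to_eqvGen h
    · exact Relation.EqvGen.symm _ _ (rtg_to_eqvGen h)

theorem eqvGen_top_unique (hfn : Functional r) (hco : CoFunctional r) {a b : β}
    (h : Relation.EqvGen r a b) (ha : IsTop r a) (hb : IsTop r b) : a = b := by
  rcases (eqvGen_iff_rtg hfn hco).1 h with h' | h'
  · rcases Relation.ReflTransGen.cases_head h' with rfl | ⟨c, hc, _⟩
    · rfl
    · exact absurd hc (ha c)
  · rcases Relation.ReflTransGen.cases_head h' with h'' | ⟨c, hc, _⟩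
    · exact h''.symm
    · exact absurd hc (hb c)

theorem exists_infinite_chain (p : β)
    (H : ∀ q, Relation.EqvGen r p q → ∃ s, r q s) :
    ∃ f : ℕ → β, f 0 = p ∧ ∀ t, r (f t) (f (t + 1)) := by
  classical
  let f : ℕ → β := fun t =>
    Nat.rec p (fun _ prev => if h : ∃ s, r prev s then h.choose else prev) t
  have hstep : ∀ t, Relation.EqvGen r p (f t) ∧ r (f t) (f (t + 1)) := by
    intro t
    induction t with
    | zero =>
      refine ⟨Relation.EqvGen.refl p, ?_⟩
      have hex : ∃ s, r (f 0) s := H (f 0) (Relation.EqvGen.refl p)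
      show r (f 0) (if h : ∃ s, r (f 0) s then h.choose else f 0)
      rw [dif_pos hex]
      exact hex.choose_spec
    | succ t ih =>
      have hgen : Relation.EqvGen r p (f (t + 1)) :=
        Relation.EqvGen.trans _ _ _ ih.1 (Relation.EqvGen.rel _ _ ih.2)
      refine ⟨hgen, ?_⟩
      have hex := H (f (t + 1)) hgen
      show r (f (t + 1)) (if h : ∃ s, r (f (t + 1)) s then h.choose else f (t + 1))
      rw [dif_pos hex]
      exact hex.choose_spec
  exact ⟨f, rfl, fun t => (hstep t).2⟩

end Dyn

section StepDyn

variable {bar : α → α} {V W : List α}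

theorem step_functional (hinv : ∀ a, bar (bar a) = a)
    (hredV : ∀ i : ZMod V.length, letterZ V (i + 1) ≠ bar (letterZ V i)) :
    Functional (Step bar V W) := by
  rintro p q q' (⟨hq, hl⟩ | ⟨hq, hl⟩) (⟨hq', hl'⟩ | ⟨hq', hl'⟩)
  · exact hq.trans hq'.symm
  · exfalso
    have hred := hredV (p.1 - 1)
    rw [sub_add_cancel] at hred
    apply hred
    rw [hl', hinv]
    exact hl
  · exfalso
    have hred := hredV (p.1 - 1)
    rw [sub_add_cancel] at hred
    apply hred
    rw [hl, hinv]
    exact hl'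
  · exact hq.trans hq'.symm

theorem step_cofunctional (hinv : ∀ a, bar (bar a) = a)
    (hredV : ∀ i : ZMod V.length, letterZ V (i + 1) ≠ bar (letterZ V i))
    {p q q' : ZMod V.length × ZMod W.length} (h1 : Step bar V W q p)
    (h2 : Step bar V W q' p) : q = q' := by
  rcases h1 with ⟨hq, hl⟩ | ⟨hq, hl⟩ <;> rcases h2 with ⟨hq', hl'⟩ | ⟨hq', hl'⟩ <;>
    have h12 := hq.symm.trans hq' <;> rw [Prod.mk.injEq] at h12
  · exact Prod.ext (by linear_combination h12.1) (by linear_combination h12.2)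
  · exfalso
    have he1 : q'.1 - 1 = q.1 + 1 := h12.1.symm
    have he2 : q'.2 = q.2 := by linear_combination -h12.2
    have hred := hredV q.1
    apply hred
    rw [← he1, hl', he2, ← hl]
  · exfalso
    have he2 : q.2 = q'.2 := by linear_combination h12.2
    have hred := hredV q'.1
    apply hred
    rw [← h12.1, hl, he2, hl']
  · exact Prod.ext (by linear_combination h12.1) (by linear_combination h12.2)

theorem chain_all_rule1 (hinv : ∀ a, bar (bar a) = a)
    (hredW : ∀ j : ZMod W.length, letterZ W (j + 1) ≠ bar (letterZ W j))
    (f : ℕ → ZMod V.length × ZMod W.length)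
    (hf : ∀ t, Step bar V W (f t) (f (t + 1)))
    (h0 : f 1 = ((f 0).1 + 1, (f 0).2 + 1) ∧ letterZ V (f 0).1 = letterZ W (f 0).2) :
    ∀ t, f (t + 1) = ((f t).1 + 1, (f t).2 + 1) ∧
      letterZ V (f t).1 = letterZ W (f t).2 := by
  intro t
  induction t with
  | zero => exact h0
  | succ t ih =>
    rcases hf (t + 1) with h | ⟨hq, hl⟩
    · exact h
    · exfalso
      rw [ih.1] at hl
      simp only [add_sub_cancel_right] at hl
      rw [ih.2] at hl
      have hred := hredW (f t).2
      apply hred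
      rw [hl, hinv]

theorem chain_all_rule2 (hinv : ∀ a, bar (bar a) = a)
    (hredW : ∀ j : ZMod W.length, letterZ W (j + 1) ≠ bar (letterZ W j))
    (f : ℕ → ZMod V.length × ZMod W.length)
    (hf : ∀ t, Step bar V W (f t) (f (t + 1)))
    (h0 : f 1 = ((f 0).1 - 1, (f 0).2 + 1) ∧
      letterZ V ((f 0).1 - 1) = bar (letterZ W (f 0).2)) :
    ∀ t, f (t + 1) = ((f t).1 - 1, (f t).2 + 1) ∧
      letterZ V ((f t).1 - 1) = bar (letterZ W (f t).2) := by
  intro t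
  induction t with
  | zero => exact h0
  | succ t ih =>
    rcases hf (t + 1) with ⟨hq, hl⟩ | h
    · exfalso
      rw [ih.1] at hl
      have hred := hredW (f t).2
      apply hred
      rw [← hl, ih.2]
    · exact h

theorem noTop_words (hinv : ∀ a, bar (bar a) = a)
    (hredW : ∀ j : ZMod W.length, letterZ W (j + 1) ≠ bar (letterZ W j))
    (p : ZMod V.length × ZMod W.length)
    (H : ∀ q, Relation.EqvGen (Step bar V W) p q → ∃ s, Step bar V W q s) :
    fwd V p.1 = fwd W p.2 ∨ bwd bar V p.1 = fwd W p.2 := by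
  obtain ⟨f, hf0, hf⟩ := exists_infinite_chain p H
  rcases hf 0 with ⟨hq, hl⟩ | ⟨hq, hl⟩
  · left
    have hall := chain_all_rule1 hinv hredW f hf ⟨hq, hl⟩
    have hcoord : ∀ t : ℕ, (f t).1 = p.1 + (t : ZMod V.length) ∧
        (f t).2 = p.2 + (t : ZMod W.length) := by
      intro t
      induction t with
      | zero => rw [hf0]; simp
      | succ t ih =>
        rw [(hall t).1]
        constructor
        · show (f t).1 + 1 = _
          rw [ih.1]; push_cast; ring
        · show (f t).2 + 1 = _
          rw [ih.2]; push_cast; ring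
    funext t
    show letterZ V (p.1 + (t : ZMod V.length)) = letterZ W (p.2 + (t : ZMod W.length))
    have hlet := (hall t).2
    rwa [(hcoord t).1, (hcoord t).2] at hlet
  · right
    have hall := chain_all_rule2 hinv hredW f hf ⟨hq, hl⟩
    have hcoord : ∀ t : ℕ, (f t).1 = p.1 - (t : ZMod V.length) ∧
        (f t).2 = p.2 + (t : ZMod W.length) := by
      intro t
      induction t with
      | zero => rw [hf0]; simp
      | succ t ih =>
        rw [(hall t).1]
        constructor
        · show (f t).1 - 1 = _
          rw [ih.1]; push_cast; ring
        · show (f t).2 + 1 = _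
          rw [ih.2]; push_cast; ring
    funext t
    show bar (letterZ V (p.1 - 1 - (t : ZMod V.length))) =
      letterZ W (p.2 + (t : ZMod W.length))
    have hlet := (hall t).2
    rw [(hcoord t).1, (hcoord t).2] at hlet
    rw [show p.1 - 1 - (t : ZMod V.length) = p.1 - (t : ZMod V.length) - 1 by ring, hlet, hinv]

end StepDyn

section ZModVal

theorem zmod_val_add_one {n : ℕ} [NeZero n] (i : ZMod n) :
    (i + 1).val = (i.val + 1) % n := by
  rw [ZMod.val_add, ZMod.val_one_eq_one_mod]
  exact Nat.ModEq.add_left i.val (Nat.mod_mod_of_dvd 1 dvd_rfl)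

end ZModVal

section FG

variable {S : Type*} [Inhabited S]

theorem conj_pow_inv {G : Type*} [Group G] (c u : G) (k : ℕ) :
    (c⁻¹ * u * c) ^ k = c⁻¹ * u ^ k * c := by
  induction k with
  | zero => simp
  | succ k ih => rw [pow_succ, ih, pow_succ]; group

theorem conj_pow' {G : Type*} [Group G] (c u : G) (k : ℕ) :
    (c * u * c⁻¹) ^ k = c * u ^ k * c⁻¹ := by
  have := conj_pow_inv c⁻¹ u k
  rwa [inv_inv] at this

theorem fg_append (L1 L2 : List (S × Bool)) :
    FreeGroup.mk (L1 ++ L2) = FreeGroup.mk L1 * FreeGroup.mk L2 :=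
  (FreeGroup.mul_mk).symm

theorem fg_wpow (L : List (S × Bool)) (k : ℕ) :
    FreeGroup.mk (wpow L k) = (FreeGroup.mk L) ^ k := by
  induction k with
  | zero => rw [pow_zero, wpow_zero, ← FreeGroup.one_eq_mk]
  | succ k ih => rw [wpow_succ, fg_append, ih, pow_succ']

theorem fg_inv_letter (a : S × Bool) :
    FreeGroup.mk [pbar a] = (FreeGroup.mk [a])⁻¹ := by
  rw [FreeGroup.inv_mk]
  rfl

theorem fg_rotZ_succ {V : List (S × Bool)} (hV : V ≠ []) (i : ZMod V.length) :
    FreeGroup.mk (rotZ V (i + 1)) =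
      (FreeGroup.mk [letterZ V i])⁻¹ * FreeGroup.mk (rotZ V i) * FreeGroup.mk [letterZ V i] := by
  haveI : NeZero V.length := ⟨fun h => hV (List.length_eq_zero_iff.1 h)⟩
  have hlen : 0 < V.length := Nat.pos_of_ne_zero (NeZero.ne _)
  show FreeGroup.mk (V.rotate (i + 1).val) = _
  rw [zmod_val_add_one, List.rotate_mod, ← List.rotate_rotate]
  obtain ⟨h, t, hL⟩ : ∃ h t, V.rotate i.val = h :: t := by
    cases hL : V.rotate i.val with
    | nil =>
      exfalso
      have := congrArg List.length hL
      rw [List.length_rotate] at this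
      simp only [List.length_nil] at this
      omega
    | cons h t => exact ⟨h, t, rfl⟩
  have hbound : (0 + i.val) % V.length < V.length := Nat.mod_lt _ hlen
  have h0' : (V.rotate i.val).getD 0 default = V.getD ((0 + i.val) % V.length) default := by
    rw [List.getD_eq_getElem _ _ (by rw [List.length_rotate]; exact hlen),
      List.getD_eq_getElem _ _ hbound]
    exact List.getElem_rotate V i.val 0 (by rw [List.length_rotate]; exact hlen)
  rw [hL] at h0'
  have hh : h = letterZ V i := by
    have h1 : h = V.getD ((0 + i.val) % V.length) default := h0'
    rw [Nat.zero_add, Nat.mod_eq_of_lt (ZMod.val_lt i)] at h1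
    exact h1
  have hrot : (h :: t).rotate 1 = t ++ [h] := by
    rw [show (1 : ℕ) = 0 + 1 from rfl, List.rotate_cons_succ, List.rotate_zero]
  have key1 : (V.rotate i.val).rotate 1 = t ++ [h] :=
    (congrArg (fun L => List.rotate L 1) hL).trans hrot
  show FreeGroup.mk ((V.rotate i.val).rotate 1) = _
  rw [key1, show rotZ V i = h :: t from hL, fg_append]
  have hmk : FreeGroup.mk (h :: t) = FreeGroup.mk [h] * FreeGroup.mk t := by
    rw [← fg_append]
    rfl
  rw [hmk, ← hh]
  group

theorem fg_rotZ_pred {V : List (S × Bool)} (hV : V ≠ []) (i : ZMod V.length) :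
    FreeGroup.mk (rotZ V (i - 1)) =
      (FreeGroup.mk [letterZ V (i - 1)]) * FreeGroup.mk (rotZ V i) *
        (FreeGroup.mk [letterZ V (i - 1)])⁻¹ := by
  have h1 := fg_rotZ_succ hV (i - 1)
  rw [sub_add_cancel] at h1
  rw [h1]
  group

theorem conj_step {V W : List (S × Bool)} (hV : CyclicallyReduced pbar V)
    (hW : CyclicallyReduced pbar W) (k l : ℕ)
    {p q : ZMod V.length × ZMod W.length} (h : Step pbar V W p q) :
    ConjClasses.mk (FreeGroup.mk (wpow (rotZ V q.1) k ++ wpow (rotZ W q.2) l)) =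
      ConjClasses.mk (FreeGroup.mk (wpow (rotZ V p.1) k ++ wpow (rotZ W p.2) l)) := by
  have hVne : V ≠ [] := hV.1
  have hWne : W ≠ [] := hW.1
  rw [ConjClasses.mk_eq_mk_iff_isConj, fg_append, fg_append, fg_wpow, fg_wpow, fg_wpow,
    fg_wpow, isConj_iff]
  rcases h with ⟨hq, hl⟩ | ⟨hq, hl⟩ <;> rw [hq]
  · refine ⟨FreeGroup.mk [letterZ V p.1], ?_⟩
    show FreeGroup.mk [letterZ V p.1] *
      ((FreeGroup.mk (rotZ V (p.1 + 1))) ^ k * (FreeGroup.mk (rotZ W (p.2 + 1))) ^ l) *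
      (FreeGroup.mk [letterZ V p.1])⁻¹ = _
    rw [fg_rotZ_succ hVne p.1, fg_rotZ_succ hWne p.2, ← hl]
    rw [conj_pow_inv, conj_pow_inv]
    group
  · refine ⟨FreeGroup.mk [letterZ W p.2], ?_⟩
    show FreeGroup.mk [letterZ W p.2] *
      ((FreeGroup.mk (rotZ V (p.1 - 1))) ^ k * (FreeGroup.mk (rotZ W (p.2 + 1))) ^ l) *
      (FreeGroup.mk [letterZ W p.2])⁻¹ = _
    rw [fg_rotZ_pred hVne p.1, fg_rotZ_succ hWne p.2, hl, fg_inv_letter]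
    rw [conj_pow_inv, conj_pow']
    group

theorem conj_eqvGen {V W : List (S × Bool)} (hV : CyclicallyReduced pbar V)
    (hW : CyclicallyReduced pbar W) (k l : ℕ)
    {p q : ZMod V.length × ZMod W.length} (h : Relation.EqvGen (Step pbar V W) p q) :
    ConjClasses.mk (FreeGroup.mk (wpow (rotZ V p.1) k ++ wpow (rotZ W p.2) l)) =
      ConjClasses.mk (FreeGroup.mk (wpow (rotZ V q.1) k ++ wpow (rotZ W q.2) l)) := by
  induction h with
  | rel a b hr => exact (conj_step hV hW k l hr).symm
  | refl => rfl
  | symm a b _ ih => exact ih.symm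
  | trans a b c _ _ ih1 ih2 => exact ih1.trans ih2

end FG

section Count

theorem card_zmod_cast_fiber {n N : ℕ} [NeZero n] [NeZero N] (hdvd : n ∣ N) (i : ZMod n) :
    Fintype.card {a : ZMod N // ((a.val : ℕ) : ZMod n) = i} = N / n := by
  classical
  set K := N / n with hK
  have hn : 0 < n := Nat.pos_of_ne_zero (NeZero.ne n)
  have hNK : N = K * n := by rw [hK, Nat.div_mul_cancel hdvd]
  refine Eq.trans (Fintype.card_congr ?_) (Fintype.card_fin K)
  have hival : i.val < n := ZMod.val_lt i
  refine ⟨fun a => ⟨a.1.val / n, ?_⟩, fun t => ⟨((i.val + t.1 * n : ℕ) : ZMod N), ?_⟩, ?_, ?_⟩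
  · have h1 : a.1.val < N := ZMod.val_lt a.1
    rw [Nat.div_lt_iff_lt_mul hn]
    omega
  · rw [zproj_natCast hdvd, Nat.cast_add, Nat.cast_mul, ZMod.natCast_self, mul_zero,
      add_zero]
    exact ZMod.natCast_rightInverse i
  · rintro ⟨a, ha⟩
    apply Subtype.ext
    show ((i.val + a.val / n * n : ℕ) : ZMod N) = a
    have hmod : a.val % n = i.val := by
      have h1 := congrArg ZMod.val ha
      rwa [ZMod.val_natCast] at h1
    rw [← hmod, Nat.mod_add_div']
    exact ZMod.natCast_rightInverse a
  · rintro ⟨t, ht⟩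
    apply Fin.ext
    show ((i.val + t * n : ℕ) : ZMod N).val / n = t
    have hbound : i.val + t * n < N := by
      rw [hNK]
      nlinarith
    rw [ZMod.val_natCast, Nat.mod_eq_of_lt hbound, Nat.add_mul_div_right _ _ hn,
      Nat.div_eq_of_lt hival, Nat.zero_add]

theorem card_pair_fiber {n m N M : ℕ} [NeZero n] [NeZero m] [NeZero N] [NeZero M]
    (hdn : n ∣ N) (hdm : m ∣ M) (t : ZMod n × ZMod m) :
    Fintype.card {a : ZMod N × ZMod M //
        (((a.1.val : ℕ) : ZMod n), ((a.2.val : ℕ) : ZMod m)) = t} = (N / n) * (M / m) := by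
  classical
  have he : {a : ZMod N × ZMod M //
      (((a.1.val : ℕ) : ZMod n), ((a.2.val : ℕ) : ZMod m)) = t} ≃
      {x : ZMod N // ((x.val : ℕ) : ZMod n) = t.1} ×
        {y : ZMod M // ((y.val : ℕ) : ZMod m) = t.2} := by
    refine ⟨fun a => (⟨a.1.1, congrArg Prod.fst a.2⟩, ⟨a.1.2, congrArg Prod.snd a.2⟩),
      fun p => ⟨(p.1.1, p.2.1), Prod.ext p.1.2 p.2.2⟩, ?_, ?_⟩
    · rintro ⟨⟨x, y⟩, h⟩
      rfl
    · rintro ⟨⟨x, hx⟩, ⟨y, hy⟩⟩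
      rfl
  rw [Fintype.card_congr he, Fintype.card_prod, card_zmod_cast_fiber hdn,
    card_zmod_cast_fiber hdm]

end Count


/-- for `X = V^k`, `Y = W^l` with `V`, `W` primitive cyclically reduced,
`Σ_{LP(X,Y)} s_(X,Y)(a,b)·⟦X_a Y_b⟧ = k·l·Σ_{LP(V,W)} s_(V,W)(i,j)·⟦(V_i)^k (W_j)^l⟧`. -/
theorem statement14 {S : Type*} [Inhabited S] [LinearOrder (S × Bool)]
    (V W : List (S × Bool))
    (hV : CyclicallyReduced pbar V) (hW : CyclicallyReduced pbar W)
    (hVprim : Primitive V) (hWprim : Primitive W)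
    (k l : ℕ) (hk : 0 < k) (hl : 0 < l) :
    combSumSimple (wpow V k) (wpow W l) = ((k : ℤ) * (l : ℤ)) • combSumPow V W k l := by
  classical
  have pinv : ∀ a : S × Bool, pbar (pbar a) = a := by
    rintro ⟨s, b⟩
    simp [pbar]
  have hVne : V ≠ [] := hV.1
  have hWne : W ≠ [] := hW.1
  have hnV : V.length ≠ 0 := fun h => hVne (List.length_eq_zero_iff.1 h)
  have hnW : W.length ≠ 0 := fun h => hWne (List.length_eq_zero_iff.1 h)
  have hXne : wpow V k ≠ [] := wpow_ne_nil hVne hk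
  have hYne : wpow W l ≠ [] := wpow_ne_nil hWne hl
  have hX0 : ¬ ((wpow V k).length = 0 ∨ (wpow W l).length = 0) := by
    push_neg
    exact ⟨fun h => hXne (List.length_eq_zero_iff.1 h), fun h => hYne (List.length_eq_zero_iff.1 h)⟩
  have hVW0 : ¬ (V.length = 0 ∨ W.length = 0) := by
    push_neg
    exact ⟨hnV, hnW⟩
  haveI : NeZero V.length := ⟨hnV⟩
  haveI : NeZero W.length := ⟨hnW⟩
  haveI : NeZero (wpow V k).length := ⟨fun h => hXne (List.length_eq_zero_iff.1 h)⟩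
  haveI : NeZero (wpow W l).length := ⟨fun h => hYne (List.length_eq_zero_iff.1 h)⟩
  rw [combSumSimple, combSumPow, dif_neg hX0, dif_neg hVW0]
  letI fQX : Fintype (Quotient (Relation.EqvGen.setoid (Step pbar (wpow V k) (wpow W l)))) :=
    Fintype.ofFinite _
  letI fQV : Fintype (Quotient (Relation.EqvGen.setoid (Step pbar V W))) := Fintype.ofFinite _
  have hdvdV : V.length ∣ (wpow V k).length := by rw [wpow_length]; exact dvd_mul_left _ _
  have hdvdW : W.length ∣ (wpow W l).length := by rw [wpow_length]; exact dvd_mul_left _ _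
  set π : ZMod (wpow V k).length × ZMod (wpow W l).length → ZMod V.length × ZMod W.length :=
    fun c => (((c.1.val : ℕ) : ZMod V.length), ((c.2.val : ℕ) : ZMod W.length)) with hπ
  have hredV : ∀ i : ZMod V.length, letterZ V (i + 1) ≠ pbar (letterZ V i) := letterZ_red hV
  have hredW : ∀ j : ZMod W.length, letterZ W (j + 1) ≠ pbar (letterZ W j) := letterZ_red hW
  have hredX : ∀ a : ZMod (wpow V k).length,
      letterZ (wpow V k) (a + 1) ≠ pbar (letterZ (wpow V k) a) := by
    intro a
    rw [letterZ_wpow hVne hk, letterZ_wpow hVne hk, zproj_add_one hdvdV]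
    exact hredV _
  have hredY : ∀ b : ZMod (wpow W l).length,
      letterZ (wpow W l) (b + 1) ≠ pbar (letterZ (wpow W l) b) := by
    intro b
    rw [letterZ_wpow hWne hl, letterZ_wpow hWne hl, zproj_add_one hdvdW]
    exact hredW _
  have hπ_step : ∀ c d, Step pbar (wpow V k) (wpow W l) c d → Step pbar V W (π c) (π d) := by
    rintro c d (⟨hq, hle⟩ | ⟨hq, hle⟩)
    · left
      refine ⟨?_, ?_⟩
      · rw [hq]
        show ((((c.1 + 1).val : ℕ) : ZMod V.length), (((c.2 + 1).val : ℕ) : ZMod W.length)) = _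
        rw [zproj_add_one hdvdV, zproj_add_one hdvdW]
      · show letterZ V ((c.1.val : ℕ) : ZMod V.length) = letterZ W ((c.2.val : ℕ) : ZMod W.length)
        rw [← letterZ_wpow hVne hk, ← letterZ_wpow hWne hl]
        exact hle
    · right
      refine ⟨?_, ?_⟩
      · rw [hq]
        show ((((c.1 - 1).val : ℕ) : ZMod V.length), (((c.2 + 1).val : ℕ) : ZMod W.length)) = _
        rw [zproj_sub_one hdvdV, zproj_add_one hdvdW]
      · show letterZ V (((c.1.val : ℕ) : ZMod V.length) - 1) =
          pbar (letterZ W ((c.2.val : ℕ) : ZMod W.length))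
        rw [← zproj_sub_one hdvdV, ← letterZ_wpow hVne hk, ← letterZ_wpow hWne hl]
        exact hle
  have hπ_eqv : ∀ c d, Relation.EqvGen (Step pbar (wpow V k) (wpow W l)) c d →
      Relation.EqvGen (Step pbar V W) (π c) (π d) := by
    intro c d h
    induction h with
    | rel a b hr => exact Relation.EqvGen.rel _ _ (hπ_step a b hr)
    | refl a => exact Relation.EqvGen.refl _
    | symm a b _ ih => exact Relation.EqvGen.symm _ _ ih
    | trans a b c _ _ ih1 ih2 => exact Relation.EqvGen.trans _ _ _ ih1 ih2
  set πq : Quotient (Relation.EqvGen.setoid (Step pbar (wpow V k) (wpow W l))) →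
      Quotient (Relation.EqvGen.setoid (Step pbar V W)) :=
    Quotient.map π (fun a b h => hπ_eqv a b h) with hπq
  set F : Quotient (Relation.EqvGen.setoid (Step pbar V W)) → (ConjClasses (FreeGroup S) →₀ ℤ) :=
    fun D => Finsupp.single
      (ConjClasses.mk (FreeGroup.mk (wpow (rotZ V D.out.1) k ++ wpow (rotZ W D.out.2) l)))
      (sgn pbar V W D.out.1 D.out.2) with hF
  have hrelout : ∀ C, Relation.EqvGen (Step pbar V W) (π C.out) ((πq C).out) := by
    intro C
    have h1 : πq C = Quotient.mk _ (π C.out) := by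
      conv_lhs => rw [← Quotient.out_eq C]
      exact Quotient.map_mk _ _ _
    rw [h1]
    have h2 : Relation.EqvGen (Step pbar V W)
        ((Quotient.mk (Relation.EqvGen.setoid (Step pbar V W)) (π C.out)).out) (π C.out) :=
      @Quotient.mk_out _ (Relation.EqvGen.setoid (Step pbar V W)) (π C.out)
    exact Relation.EqvGen.symm _ _ h2
  have hsummand : ∀ C, Finsupp.single
      (ConjClasses.mk (FreeGroup.mk (rotZ (wpow V k) C.out.1 ++ rotZ (wpow W l) C.out.2)))
      (sgn pbar (wpow V k) (wpow W l) C.out.1 C.out.2) = F (πq C) := by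
    intro C
    have hs : sgn pbar (wpow V k) (wpow W l) C.out.1 C.out.2 =
        sgn pbar V W ((πq C).out).1 ((πq C).out).2 := by
      rw [sgn_wpow hVne hWne hk hl]
      exact sgn_eqvGen pinv hV hW (hrelout C)
    have hc : ConjClasses.mk
        (FreeGroup.mk (rotZ (wpow V k) C.out.1 ++ rotZ (wpow W l) C.out.2)) =
        ConjClasses.mk (FreeGroup.mk
          (wpow (rotZ V ((πq C).out.1)) k ++ wpow (rotZ W ((πq C).out.2)) l)) := by
      rw [rotZ_wpow hVne hk, rotZ_wpow hWne hl]
      exact conj_eqvGen hV hW k l (hrelout C)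
    rw [hF, hs, hc]
  rw [Finset.smul_sum]
  refine Eq.trans (Finset.sum_congr rfl (fun C _ => hsummand C)) ?_
  rw [← Fintype.sum_fiberwise πq (fun C => F (πq C))]
  refine Finset.sum_congr rfl (fun D _ => ?_)
  have hconst : ∀ (C : {C // πq C = D}), F (πq C.1) = F D := fun C => by rw [C.2]
  rw [Finset.sum_congr rfl (fun C _ => hconst C), Finset.sum_const]
  by_cases hzero : sgn pbar V W D.out.1 D.out.2 = 0
  · rw [hF]
    simp only [hzero, Finsupp.single_zero, smul_zero]
  · -- counting
    have htop : ∃ t0, Relation.EqvGen (Step pbar V W) D.out t0 ∧ IsTop (Step pbar V W) t0 := by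
      by_contra hno
      push_neg at hno
      have H : ∀ q, Relation.EqvGen (Step pbar V W) D.out q → ∃ s, Step pbar V W q s := by
        intro q hq
        have h1 := hno q hq
        unfold IsTop at h1
        push_neg at h1
        exact h1
      rcases noTop_words pinv hredW D.out H with he | he
      · exact hzero (sgn_eq_zero_fwd_fwd he)
      · exact hzero (sgn_eq_zero_bwd_fwd he)
    obtain ⟨t0, ht0rel, ht0top⟩ := htop
    have hDt0 : Quotient.mk (Relation.EqvGen.setoid (Step pbar V W)) t0 = D := by
      rw [← Quotient.out_eq D]
      exact (Quotient.sound ht0rel).symm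
    have hstep_lift : ∀ c q', Step pbar V W (π c) q' →
        ∃ d, Step pbar (wpow V k) (wpow W l) c d := by
      rintro c q' (⟨hq, hle⟩ | ⟨hq, hle⟩)
      · refine ⟨(c.1 + 1, c.2 + 1), Or.inl ⟨rfl, ?_⟩⟩
        rw [letterZ_wpow hVne hk, letterZ_wpow hWne hl]
        exact hle
      · refine ⟨(c.1 - 1, c.2 + 1), Or.inr ⟨rfl, ?_⟩⟩
        rw [letterZ_wpow hVne hk, letterZ_wpow hWne hl, zproj_sub_one hdvdV]
        exact hle
    have htop_iff : ∀ c, IsTop (Step pbar (wpow V k) (wpow W l)) c ↔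
        IsTop (Step pbar V W) (π c) := by
      intro c
      constructor
      · intro h q' hq'
        obtain ⟨d, hd⟩ := hstep_lift c q' hq'
        exact h d hd
      · intro h d hd
        exact h (π d) (hπ_step c d hd)
    have hfnX : Functional (Step pbar (wpow V k) (wpow W l)) := step_functional pinv hredX
    have hcoX : CoFunctional (Step pbar (wpow V k) (wpow W l)) := fun a b c h1 h2 =>
      step_cofunctional pinv hredX h1 h2
    have hfnv : Functional (Step pbar V W) := step_functional pinv hredV
    have hcov : CoFunctional (Step pbar V W) := fun a b c h1 h2 =>
      step_cofunctional pinv hredV h1 h2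
    have hbij : Function.Bijective (fun a : {a // π a = t0} =>
        (⟨Quotient.mk (Relation.EqvGen.setoid (Step pbar (wpow V k) (wpow W l))) a.1, by
          show πq (Quotient.mk _ a.1) = D
          have h1 : πq (Quotient.mk _ a.1) = Quotient.mk _ (π a.1) := rfl
          rw [h1, a.2, hDt0]⟩ : {C // πq C = D})) := by
      constructor
      · rintro ⟨a, ha⟩ ⟨b, hb⟩ hab
        have h1 : Relation.EqvGen (Step pbar (wpow V k) (wpow W l)) a b := by
          have h2 := congrArg Subtype.val hab
          exact Quotient.exact h2
        have hta : IsTop (Step pbar (wpow V k) (wpow W l)) a := by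
          apply (htop_iff a).2
          rw [ha]
          exact ht0top
        have htb : IsTop (Step pbar (wpow V k) (wpow W l)) b := by
          apply (htop_iff b).2
          rw [hb]
          exact ht0top
        exact Subtype.ext (eqvGen_top_unique hfnX hcoX h1 hta htb)
      · rintro ⟨C, hC⟩
        have hrelC : Relation.EqvGen (Step pbar V W) (π C.out) D.out := by
          have h1 := hrelout C
          rw [hC] at h1
          exact h1
        have hCtop : ∃ c, Relation.EqvGen (Step pbar (wpow V k) (wpow W l)) C.out c ∧
            IsTop (Step pbar (wpow V k) (wpow W l)) c := by
          by_contra hno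
          push_neg at hno
          have H : ∀ q, Relation.EqvGen (Step pbar (wpow V k) (wpow W l)) C.out q →
              ∃ s, Step pbar (wpow V k) (wpow W l) q s := by
            intro q hq
            have h1 := hno q hq
            unfold IsTop at h1
            push_neg at h1
            exact h1
          have hz : sgn pbar V W (π C.out).1 (π C.out).2 = 0 := by
            rcases noTop_words pinv hredY C.out H with he | he
            · apply sgn_eq_zero_fwd_fwd
              show fwd V ((C.out.1.val : ℕ) : ZMod V.length) =
                fwd W ((C.out.2.val : ℕ) : ZMod W.length)
              rw [← fwd_wpow hVne hk, ← fwd_wpow hWne hl]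
              exact he
            · apply sgn_eq_zero_bwd_fwd
              show bwd pbar V ((C.out.1.val : ℕ) : ZMod V.length) =
                fwd W ((C.out.2.val : ℕ) : ZMod W.length)
              rw [← bwd_wpow hVne hk, ← fwd_wpow hWne hl]
              exact he
          apply hzero
          rw [← sgn_eqvGen pinv hV hW hrelC]
          exact hz
        obtain ⟨c, hcrel, hctop⟩ := hCtop
        have hπc : π c = t0 := by
          apply eqvGen_top_unique hfnv hcov ?_ ((htop_iff c).1 hctop) ht0top
          have e1 : Relation.EqvGen (Step pbar V W) (π C.out) (π c) := hπ_eqv _ _ hcrel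
          exact Relation.EqvGen.trans _ _ _ (Relation.EqvGen.symm _ _ e1)
            (Relation.EqvGen.trans _ _ _ hrelC ht0rel)
        refine ⟨⟨c, hπc⟩, Subtype.ext ?_⟩
        show Quotient.mk _ c = C
        rw [← Quotient.out_eq C]
        exact (Quotient.sound hcrel).symm
    have hcard1 : Fintype.card {C // πq C = D} = Fintype.card {a // π a = t0} :=
      (Fintype.card_of_bijective hbij).symm
    have hcard2 : Fintype.card {a : ZMod (wpow V k).length × ZMod (wpow W l).length //
        π a = t0} = ((wpow V k).length / V.length) * ((wpow W l).length / W.length) := by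
      refine Eq.trans (Fintype.card_congr (Equiv.subtypeEquivRight (fun a => ?_)))
        (card_pair_fiber hdvdV hdvdW t0)
      exact Iff.rfl
    have hdiv1 : (wpow V k).length / V.length = k := by
      rw [wpow_length]
      exact Nat.mul_div_cancel k (Nat.pos_of_ne_zero hnV)
    have hdiv2 : (wpow W l).length / W.length = l := by
      rw [wpow_length]
      exact Nat.mul_div_cancel l (Nat.pos_of_ne_zero hnW)
    rw [Finset.card_univ, hcard1, hcard2, hdiv1, hdiv2, ← Nat.cast_smul_eq_nsmul ℤ,
      Nat.cast_mul]


end GoldmanPaper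
end
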